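/- arXiv:1502.00150 — 10 statements merged into one kernel-verified Lean document; each statement's English description precedes it below -/
import Mathlib

section
/- The series ∑_{n=0}^∞ (2n)! / (2^{2n} (2n+1) (n!)^2) converges and its sum equals π/2. -/
/-!
With `c n = (2n choose n) / 4 ^ n`, the series `∑ c n * x ^ n` is the binomial series of
`(1 - x) ^ (-1/2)`, so `∑ c n * t ^ (2n) = 1 / √(1 - t²)` for `|t| < 1`. The terms are
nonnegative, so the series may be integrated termwise over `[0, 1]`, which gives
`∑ c n / (2n + 1) = ∫₀¹ dt / √(1 - t²) = arcsin 1 = π / 2`.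
-/

open Real Set MeasureTheory
open scoped Interval

theorem ascPochhammer_eval_half_mul_four_pow (n : ℕ) :
    (ascPochhammer ℝ n).eval (1 / 2) * 4 ^ n = n.centralBinom * n.factorial := by
  induction n with
  | zero => simp
  | succ n ih =>
    have h : ((n + 1) * (n + 1).centralBinom : ℝ) = 2 * (2 * n + 1) * n.centralBinom := by
      exact_mod_cast n.succ_mul_centralBinom_succ
    rw [ascPochhammer_succ_eval, Nat.factorial_succ, pow_succ]
    push_cast
    linear_combination 4 * ((1 : ℝ) / 2 + n) * ih - n.factorial * h

theorem Ring.choose_natCast_sub_half (n : ℕ) :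
    Ring.choose ((n : ℝ) - 1 / 2) n = n.centralBinom / 4 ^ n := by
  rw [Ring.choose_eq_smul, Polynomial.descPochhammer_smeval_eq_ascPochhammer,
    Polynomial.ascPochhammer_smeval_eq_eval,
    smul_eq_mul, eq_div_iff (by positivity), show (n : ℝ) - 1 / 2 - n + 1 = 1 / 2 by ring,
    mul_assoc, ascPochhammer_eval_half_mul_four_pow]
  field_simp

theorem hasSum_centralBinom_div_four_pow_mul_pow {x : ℝ} (hx : |x| < 1) :
    HasSum (fun n => (n.centralBinom / 4 ^ n : ℝ) * x ^ n) (√(1 - x))⁻¹ := by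
  have hcoeff (n : ℕ) : Ring.choose (1 / 2 + (n : ℝ) - 1) n = n.centralBinom / 4 ^ n := by
    rw [← Ring.choose_natCast_sub_half]; ring_nf
  have h := (one_div_one_sub_rpow_hasFPowerSeriesOnBall_zero (1 / 2)).hasSum (y := x)
    (by simpa [enorm_eq_nnnorm, ← NNReal.coe_lt_coe] using hx)
  simp only [FormalMultilinearSeries.ofScalars_apply_eq', zero_add, smul_eq_mul, hcoeff] at h
  rwa [sqrt_eq_rpow, ← one_div]

theorem hasSum_centralBinom_div_four_pow_mul_pow_two_mul {t : ℝ} (ht : t ∈ Ioo (-1 : ℝ) 1) :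
    HasSum (fun n => (n.centralBinom / 4 ^ n : ℝ) * t ^ (2 * n)) (√(1 - t ^ 2))⁻¹ := by
  simpa [pow_mul] using hasSum_centralBinom_div_four_pow_mul_pow (x := t ^ 2)
    (by rw [abs_of_nonneg (sq_nonneg t)]; nlinarith [ht.1, ht.2])

theorem hasDerivAt_arcsin_of_mem_Ioo {x : ℝ} (hx : x ∈ Ioo (-1 : ℝ) 1) :
    HasDerivAt arcsin (√(1 - x ^ 2))⁻¹ x := by
  simpa using hasDerivAt_arcsin hx.1.ne' hx.2.ne

theorem intervalIntegrable_inv_sqrt_one_sub_sq :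
    IntervalIntegrable (fun x : ℝ => (√(1 - x ^ 2))⁻¹) volume 0 1 := by
  rw [intervalIntegrable_iff_integrableOn_Ioc_of_le zero_le_one]
  exact intervalIntegral.integrableOn_deriv_of_nonneg continuous_arcsin.continuousOn
    (fun x hx => hasDerivAt_arcsin_of_mem_Ioo ⟨by linarith [hx.1], hx.2⟩) fun x _ => by positivity

theorem integral_inv_sqrt_one_sub_sq : ∫ x in (0 : ℝ)..1, (√(1 - x ^ 2))⁻¹ = π / 2 := by
  rw [intervalIntegral.integral_eq_sub_of_hasDerivAt_of_le zero_le_one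
    continuous_arcsin.continuousOn
    (fun x hx => hasDerivAt_arcsin_of_mem_Ioo ⟨by linarith [hx.1], hx.2⟩)
    intervalIntegrable_inv_sqrt_one_sub_sq]
  simp

theorem hasSum_centralBinom_div_four_pow_div_two_mul_add_one :
    HasSum (fun n : ℕ => (n.centralBinom / 4 ^ n : ℝ) / (2 * n + 1)) (π / 2) := by
  set F : ℕ → ℝ → ℝ := fun n t => (n.centralBinom / 4 ^ n : ℝ) * t ^ (2 * n) with hF
  have hF_nonneg (n : ℕ) (t : ℝ) : 0 ≤ F n t :=
    mul_nonneg (by positivity) ((even_two_mul n).pow_nonneg t)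
  -- the series diverges at `t = 1`, a null set
  have hae : ∀ᵐ t : ℝ, t ∈ Ι (0 : ℝ) 1 → t ∈ Ioo (-1 : ℝ) 1 := by
    filter_upwards [measure_eq_zero_iff_ae_notMem.1 (measure_singleton (μ := volume) (1 : ℝ))]
      with t ht1 ht
    rw [uIoc_of_le zero_le_one] at ht
    exact ⟨by linarith [ht.1], lt_of_le_of_ne ht.2 ht1⟩
  -- nonnegative terms dominate themselves
  have h := intervalIntegral.hasSum_integral_of_dominated_convergence F
    (fun n => (by fun_prop : Continuous (F n)).aestronglyMeasurable)
    (fun n => ae_of_all _ fun t _ => (norm_of_nonneg (hF_nonneg n t)).le)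
    (hae.mono fun t ht h => (hasSum_centralBinom_div_four_pow_mul_pow_two_mul (ht h)).summable)
    (intervalIntegrable_inv_sqrt_one_sub_sq.congr_uIoo fun t ht =>
      (hasSum_centralBinom_div_four_pow_mul_pow_two_mul
        (by rw [uIoo_of_le zero_le_one] at ht; exact ⟨by linarith [ht.1], ht.2⟩)).tsum_eq.symm)
    (hae.mono fun t ht h => hasSum_centralBinom_div_four_pow_mul_pow_two_mul (ht h))
  have hterm (n : ℕ) : ∫ t in (0 : ℝ)..1, F n t = (n.centralBinom / 4 ^ n : ℝ) / (2 * n + 1) := by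
    simp [hF, integral_pow, div_eq_mul_inv]
  simpa only [hterm, integral_inv_sqrt_one_sub_sq] using h

theorem stmt_0 :
    HasSum (fun n : ℕ =>
      ((2 * n).factorial : ℝ) / (2 ^ (2 * n) * (2 * n + 1) * (n.factorial) ^ 2))
      (Real.pi / 2) := by
  convert hasSum_centralBinom_div_four_pow_div_two_mul_add_one using 1
  ext n
  rw [Nat.centralBinom, Nat.cast_choose ℝ (by omega : n ≤ 2 * n), show 2 * n - n = n by omega,
    pow_mul]
  field_simp
  norm_num
end

section
/- Let (c_n)_{n∈ℤ} be a cosine sequence in a unital Banach algebra A (i.e., c_0 = 1 and c_{m+n} + c_{m−n} = 2 c_m c_n for all m,n ∈ ℤ). Then for every p ≥ 1 there exist nonnegative reals α_{0,p},…,α_{p,p} with ∑_{k=0}^p α_{k,p} = 1 such that c_1^p = ∑_{k=0}^p α_{k,p} c_k. -/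
private lemma cosine_aux {A : Type*} [NormedRing A] [NormedAlgebra ℝ A]
    (c : ℤ → A) (hc0 : c 0 = 1)
    (hc : ∀ m n : ℤ, c (m + n) + c (m - n) = 2 * c m * c n) :
    ∀ p : ℕ, ∃ α : ℕ → ℝ, (∀ k, 0 ≤ α k) ∧ (∀ k, p < k → α k = 0) ∧
      (∑ k ∈ Finset.range (p + 1), α k) = 1 ∧
      (c 1) ^ p = ∑ k ∈ Finset.range (p + 1), α k • c k := by
  have heven : ∀ n : ℤ, c (-n) = c n := by
    intro n
    have h := hc 0 n
    rw [hc0, zero_add, zero_sub] at h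
    have : c n + c (-n) = c n + c n := by rw [h, mul_one, two_mul]
    exact add_left_cancel this
  have hmul : ∀ m : ℤ, c m * c 1 = (2⁻¹ : ℝ) • (c (m + 1) + c (m - 1)) := by
    intro m
    have h := hc m 1
    rw [h]
    have h2 : (2 : A) * (c m * c 1) = (2 : ℝ) • (c m * c 1) := by
      rw [two_smul, two_mul]
    rw [mul_assoc, h2, smul_smul]
    norm_num
  intro p
  induction p with
  | zero =>
    refine ⟨fun k => if k = 0 then 1 else 0, ?_, ?_, ?_, ?_⟩
    · intro k; positivity
    · intro k hk
      have : k ≠ 0 := by omega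
      simp [this]
    · simp
    · simp [hc0]
  | succ p ih =>
    obtain ⟨α, hpos, hvan, hsum, heq⟩ := ih
    refine ⟨fun j => α (j + 1) / 2 + (if j = 1 then α 0 / 2 else 0)
        + (if j = 0 then 0 else α (j - 1) / 2), ?_, ?_, ?_, ?_⟩
    · intro k
      have h1 := hpos (k + 1)
      have h2 := hpos 0
      have h3 : 0 ≤ (if k = 1 then α 0 / 2 else 0) := by positivity
      have h4 : 0 ≤ (if k = 0 then 0 else α (k - 1) / 2) := by
        split
        · exact le_refl 0
        · have := hpos (k - 1); linarith
      dsimp only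
      linarith
    · intro k hk
      have h1 : α (k + 1) = 0 := hvan _ (by omega)
      have h2 : α (k - 1) = 0 := hvan _ (by omega)
      have hk1 : k ≠ 1 := by omega
      have hk0 : k ≠ 0 := by omega
      simp [h1, h2, hk1, hk0]
    · -- sum of coefficients is 1
      rw [Finset.sum_add_distrib, Finset.sum_add_distrib]
      have hA : (∑ j ∈ Finset.range (p + 2), α (j + 1) / 2) = (1 - α 0) / 2 := by
        have h1 : (∑ j ∈ Finset.range (p + 2), α (j + 1) / 2)
            = (∑ j ∈ Finset.range p, α (j + 1) / 2) := by
          rw [Finset.sum_range_succ, Finset.sum_range_succ,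
            hvan (p + 1) (by omega), hvan (p + 1 + 1) (by omega)]
          ring
        have h2 : (∑ k ∈ Finset.range (p + 1), α k / 2)
            = (∑ j ∈ Finset.range p, α (j + 1) / 2) + α 0 / 2 :=
          Finset.sum_range_succ' (fun k => α k / 2) p
        have h3 : (∑ k ∈ Finset.range (p + 1), α k / 2) = 1 / 2 := by
          rw [← Finset.sum_div, hsum]
        rw [h1]; linarith
      have hB : (∑ j ∈ Finset.range (p + 2), (if j = 1 then α 0 / 2 else 0)) = α 0 / 2 := by
        rw [Finset.sum_ite_eq' (Finset.range (p + 2)) 1 (fun _ => α 0 / 2)]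
        simp
      have hC : (∑ j ∈ Finset.range (p + 2), (if j = 0 then 0 else α (j - 1) / 2)) = 1 / 2 := by
        rw [Finset.sum_range_succ' (fun j => if j = 0 then 0 else α (j - 1) / 2) (p + 1)]
        have h5 : (∑ i ∈ Finset.range (p + 1), α i / 2) = 1 / 2 := by
          rw [← Finset.sum_div, hsum]
        simpa using h5
      rw [hA, hB, hC]; ring
    · -- the main identity
      have hstep : (c 1) ^ (p + 1) = ∑ k ∈ Finset.range (p + 1),
          ((α k / 2) • c (k + 1) + (α k / 2) • c ((k : ℤ) - 1)) := by
        rw [pow_succ, heq, Finset.sum_mul]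
        refine Finset.sum_congr rfl fun k _ => ?_
        rw [smul_mul_assoc, hmul, smul_smul, smul_add, div_eq_mul_inv]
      rw [hstep, Finset.sum_add_distrib]
      -- RHS: split the beta sum
      have hsplit : (∑ j ∈ Finset.range (p + 2),
          (α (j + 1) / 2 + (if j = 1 then α 0 / 2 else 0)
            + (if j = 0 then 0 else α (j - 1) / 2)) • c j)
          = (∑ j ∈ Finset.range (p + 2), (α (j + 1) / 2) • c j)
          + (∑ j ∈ Finset.range (p + 2), (if j = 1 then α 0 / 2 else 0) • c j)
          + (∑ j ∈ Finset.range (p + 2), (if j = 0 then (0:ℝ) else α (j - 1) / 2) • c j) := by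
        rw [← Finset.sum_add_distrib, ← Finset.sum_add_distrib]
        refine Finset.sum_congr rfl fun j _ => ?_
        rw [add_smul, add_smul]
      rw [hsplit]
      -- sum C equals first sum (shifted)
      have hCsum : (∑ j ∈ Finset.range (p + 2), (if j = 0 then (0:ℝ) else α (j - 1) / 2) • c j)
          = ∑ k ∈ Finset.range (p + 1), (α k / 2) • c (k + 1) := by
        rw [Finset.sum_range_succ' (fun j => (if j = 0 then (0:ℝ) else α (j - 1) / 2) • c j) (p + 1)]
        simp only [Nat.succ_ne_zero, if_false, Nat.add_sub_cancel, if_true, reduceIte,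
          zero_smul, add_zero, smul_eq_mul]
        refine Finset.sum_congr rfl fun k _ => ?_
        push_cast
        ring_nf
      have hBsum : (∑ j ∈ Finset.range (p + 2), (if j = 1 then α 0 / 2 else 0) • c j)
          = (α 0 / 2) • c 1 := by
        rw [Finset.sum_eq_single 1]
        · simp
        · intro b _ hb; simp [hb]
        · intro h; exfalso; exact h (Finset.mem_range.mpr (by omega))
      have hAsum : (∑ j ∈ Finset.range (p + 2), (α (j + 1) / 2) • c j)
          = ∑ j ∈ Finset.range p, (α (j + 1) / 2) • c j := by
        rw [Finset.sum_range_succ, Finset.sum_range_succ,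
          hvan (p + 1) (by omega), hvan (p + 1 + 1) (by omega)]
        simp
      have hS2 : (∑ k ∈ Finset.range (p + 1), (α k / 2) • c ((k : ℤ) - 1))
          = (∑ j ∈ Finset.range p, (α (j + 1) / 2) • c j) + (α 0 / 2) • c 1 := by
        rw [Finset.sum_range_succ' (fun k => (α k / 2) • c ((k : ℤ) - 1)) p]
        congr 1
        · refine Finset.sum_congr rfl fun j _ => ?_
          push_cast
          ring_nf
        · show (α 0 / 2) • c ((0:ℤ) - 1) = (α 0 / 2) • c 1
          rw [show ((0:ℤ) - 1) = -1 by ring, heven 1]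
      rw [hCsum, hBsum, hAsum, hS2]
      push_cast
      abel

theorem stmt_2 {A : Type*} [NormedRing A] [NormedAlgebra ℝ A] [CompleteSpace A]
    (c : ℤ → A) (hc0 : c 0 = 1)
    (hc : ∀ m n : ℤ, c (m + n) + c (m - n) = 2 * c m * c n)
    (p : ℕ) (hp : 1 ≤ p) :
    ∃ α : ℕ → ℝ, (∀ k ≤ p, 0 ≤ α k) ∧
      (∑ k ∈ Finset.range (p + 1), α k) = 1 ∧
      (c 1) ^ p = ∑ k ∈ Finset.range (p + 1), α k • c k := by
  obtain ⟨α, h1, _, h3, h4⟩ := cosine_aux c hc0 hc p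
  exact ⟨α, fun k _ => h1 k, h3, h4⟩
end

section
/- Every bounded complex-valued cosine sequence (c_n)_{n∈ℤ} takes values in the real interval [−1, 1]. -/
/-!
Every cosine sequence satisfies the doubling law `c (2 * n) = 2 * c n ^ 2 - 1`, so
`c (2 ^ k * n)` is the `k`-th iterate of `z ↦ 2 * z ^ 2 - 1` at `c n`. Writing
`c n = (w + w⁻¹) / 2`, this iterate is `(w ^ 2 ^ k + w⁻¹ ^ 2 ^ k) / 2`, which is unbounded as
soon as `‖w‖ > 1`. Since `w` and `w⁻¹` give the same value, boundedness forces `‖w‖ = 1`,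
that is `w⁻¹ = conj w`, and then `c n = w.re ∈ [-1, 1]`.
-/

open Complex ComplexConjugate Set

/-- The map taking `cos θ` to `cos 2θ`. -/
def cosDouble {R : Type*} [Ring R] (z : R) : R := 2 * z ^ 2 - 1

noncomputable def joukowski (w : ℂ) : ℂ := (w + w⁻¹) / 2

section CosineSequence

variable {R : Type*} [CommRing R] {c : ℤ → R}

theorem cosine_two_mul (hc0 : c 0 = 1)
    (hc : ∀ m n : ℤ, c (m + n) + c (m - n) = 2 * c m * c n) (n : ℤ) :
    c (2 * n) = cosDouble (c n) := by
  have h := hc n n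
  rw [sub_self, hc0, ← two_mul] at h
  rw [cosDouble]
  linear_combination h

theorem cosDouble_iterate_cosine (hc0 : c 0 = 1)
    (hc : ∀ m n : ℤ, c (m + n) + c (m - n) = 2 * c m * c n) (n : ℤ) (k : ℕ) :
    cosDouble^[k] (c n) = c (2 ^ k * n) := by
  induction k with
  | zero => simp
  | succ k ih =>
    rw [Function.iterate_succ_apply', ih, ← cosine_two_mul hc0 hc, pow_succ', mul_assoc]

end CosineSequence

section Joukowski

theorem joukowski_inv (w : ℂ) : joukowski w⁻¹ = joukowski w := by
  rw [joukowski, joukowski, inv_inv, add_comm]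

theorem exists_ne_zero_joukowski_eq (z : ℂ) : ∃ w ≠ 0, joukowski w = z := by
  obtain ⟨s, hs⟩ := IsAlgClosed.exists_eq_mul_self (z ^ 2 - 1)
  have hprod : (z + s) * (z - s) = 1 := by linear_combination hs
  refine ⟨z + s, left_ne_zero_of_mul_eq_one hprod, ?_⟩
  rw [joukowski, ← eq_inv_of_mul_eq_one_right hprod]
  ring

theorem cosDouble_joukowski {w : ℂ} (hw : w ≠ 0) :
    cosDouble (joukowski w) = joukowski (w ^ 2) := by
  rw [cosDouble, joukowski, joukowski]
  field_simp
  ring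

theorem cosDouble_iterate_joukowski {w : ℂ} (hw : w ≠ 0) (k : ℕ) :
    cosDouble^[k] (joukowski w) = joukowski (w ^ 2 ^ k) := by
  induction k with
  | zero => simp
  | succ k ih =>
    rw [Function.iterate_succ_apply', ih, cosDouble_joukowski (pow_ne_zero _ hw), ← pow_mul,
      ← pow_succ]

theorem norm_sub_one_le_two_mul_norm_joukowski {w : ℂ} (hw : 1 ≤ ‖w‖) :
    ‖w‖ - 1 ≤ 2 * ‖joukowski w‖ := by
  have hinv : ‖w⁻¹‖ ≤ 1 := by rw [norm_inv]; exact inv_le_one_of_one_le₀ hw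
  have htri : ‖w‖ - ‖w⁻¹‖ ≤ ‖w + w⁻¹‖ := by simpa using norm_sub_norm_le w (-w⁻¹)
  have hj : 2 * ‖joukowski w‖ = ‖w + w⁻¹‖ := by simp [joukowski]; ring
  linarith

theorem norm_le_one_of_bddAbove_joukowski_pow {w : ℂ}
    (h : BddAbove (range fun k : ℕ => ‖joukowski (w ^ 2 ^ k)‖)) : ‖w‖ ≤ 1 := by
  by_contra! hw
  obtain ⟨M, hM⟩ := h
  obtain ⟨k, hk⟩ := pow_unbounded_of_one_lt (2 * M + 1) hw
  have hbound := norm_sub_one_le_two_mul_norm_joukowski (w := w ^ 2 ^ k)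
    (by rw [norm_pow]; exact one_le_pow₀ hw.le)
  have hM' : ‖joukowski (w ^ 2 ^ k)‖ ≤ M := hM (mem_range_self k)
  have hgrow : ‖w‖ ^ k ≤ ‖w ^ 2 ^ k‖ := by
    rw [norm_pow]; exact pow_le_pow_right₀ hw.le Nat.lt_two_pow_self.le
  linarith

theorem joukowski_eq_re_of_norm_eq_one {w : ℂ} (hw : ‖w‖ = 1) : joukowski w = w.re := by
  have hconj : w⁻¹ = conj w := by
    rw [inv_def, normSq_eq_norm_sq, hw]
    simp
  rw [joukowski, hconj, add_conj]
  push_cast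
  ring

end Joukowski

theorem im_eq_zero_and_re_mem_Icc_of_bddAbove_cosDouble_iterate {z : ℂ}
    (h : BddAbove (range fun k : ℕ => ‖cosDouble^[k] z‖)) : z.im = 0 ∧ z.re ∈ Icc (-1 : ℝ) 1 := by
  obtain ⟨w, hw, rfl⟩ := exists_ne_zero_joukowski_eq z
  have hle : ∀ v : ℂ, v ≠ 0 → joukowski v = joukowski w → ‖v‖ ≤ 1 := fun v hv hvw ↦
    norm_le_one_of_bddAbove_joukowski_pow <| by
      simpa only [← hvw, cosDouble_iterate_joukowski hv] using h
  have hnorm : ‖w‖ = 1 := by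
    have hinv := hle w⁻¹ (inv_ne_zero hw) (joukowski_inv w)
    rw [norm_inv, inv_le_one₀ (norm_pos_iff.mpr hw)] at hinv
    exact le_antisymm (hle w hw rfl) hinv
  rw [joukowski_eq_re_of_norm_eq_one hnorm, ofReal_im, ofReal_re]
  exact ⟨rfl, abs_le.mp (hnorm ▸ abs_re_le_norm w)⟩

theorem stmt_4 (c : ℤ → ℂ) (hc0 : c 0 = 1)
    (hc : ∀ m n : ℤ, c (m + n) + c (m - n) = 2 * c m * c n)
    (hb : ∃ M : ℝ, ∀ n : ℤ, ‖c n‖ ≤ M) :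
    ∀ n : ℤ, (c n).im = 0 ∧ (c n).re ∈ Set.Icc (-1 : ℝ) 1 := by
  obtain ⟨M, hM⟩ := hb
  intro n
  refine im_eq_zero_and_re_mem_Icc_of_bddAbove_cosDouble_iterate ⟨M, ?_⟩
  rintro _ ⟨k, rfl⟩
  simpa only [cosDouble_iterate_cosine hc0 hc] using hM (2 ^ k * n)
end

section
/- Every bounded complex-valued cosine function (c(t))_{t∈ℝ} takes values in [−1, 1], and if additionally c is continuous then there exists a ∈ ℝ with c(t) = cos(at) for all t ∈ ℝ. -/
/-!
Write `2 c(t) = z + z⁻¹`. Both `k ↦ c(k t)` and `k ↦ (z ^ k + z ^ (-k)) / 2` are cosine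
functions on `ℤ` with the same value at `1`, so they agree on `ℕ`; boundedness in `k` forces
`‖z‖ = 1`, i.e. `z⁻¹ = conj z`, and `c(t) = Re z ∈ [-1, 1]`.

If `c` is moreover continuous, its real part `f` is nonnegative on some `[0, δ]`. With
`a δ = arccos f(δ)`, the functions `f` and `cos(a ·)` agree at `δ`, hence at every `δ / 2 ^ n`
(both are nonnegative there, and `f(x + x) = 2 f(x)² - 1` determines a nonnegative `f(x)`),
hence at all integer multiples of these points, and so everywhere by continuity.
-/

open Filter Topology Real

structure IsCosineFunction {G R : Type*} [AddGroup G] [CommRing R] (f : G → R) : Prop where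
  map_zero : f 0 = 1
  map_add_add_map_sub : ∀ s t, f (s + t) + f (s - t) = 2 * f s * f t

namespace IsCosineFunction

variable {G H R : Type*} [AddCommGroup G] [AddCommGroup H]

section CommRing

variable [CommRing R] {f g : G → R}

theorem comp (hf : IsCosineFunction f) (φ : H →+ G) : IsCosineFunction (f ∘ φ) where
  map_zero := by simp [hf.map_zero]
  map_add_add_map_sub s t := by simpa using hf.map_add_add_map_sub (φ s) (φ t)

theorem map_neg (hf : IsCosineFunction f) (t : G) : f (-t) = f t := by
  have h := hf.map_add_add_map_sub 0 t
  rw [zero_add, zero_sub, hf.map_zero] at h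
  linear_combination h

theorem map_add_self (hf : IsCosineFunction f) (t : G) : f (t + t) = 2 * f t ^ 2 - 1 := by
  have h := hf.map_add_add_map_sub t t
  rw [sub_self, hf.map_zero] at h
  linear_combination h

theorem map_nsmul_eq (hf : IsCosineFunction f) (hg : IsCosineFunction g) {h : G}
    (hfg : f h = g h) (k : ℕ) : f (k • h) = g (k • h) := by
  induction k using Nat.twoStepInduction with
  | zero => simp [hf.map_zero, hg.map_zero]
  | one => simpa using hfg
  | more k hk hk1 =>
    have hf' := hf.map_add_add_map_sub ((k + 1) • h) h
    have hg' := hg.map_add_add_map_sub ((k + 1) • h) h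
    have hk_sub : (k + 1) • h - h = k • h := by rw [succ_nsmul, add_sub_cancel_right]
    rw [← succ_nsmul, hk_sub] at hf' hg'
    linear_combination hf' - hg' + 2 * (f h * hk1 + g ((k + 1) • h) * hfg) - hk

theorem map_zsmul_eq (hf : IsCosineFunction f) (hg : IsCosineFunction g) {h : G}
    (hfg : f h = g h) (k : ℤ) : f (k • h) = g (k • h) := by
  cases k with
  | ofNat k => simpa using hf.map_nsmul_eq hg hfg k
  | negSucc k =>
    simpa [negSucc_zsmul, hf.map_neg, hg.map_neg] using hf.map_nsmul_eq hg hfg (k + 1)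

end CommRing

theorem eq_of_map_add_self_eq [Field R] [LinearOrder R] [IsStrictOrderedRing R]
    {f g : G → R} (hf : IsCosineFunction f) (hg : IsCosineFunction g) {x : G}
    (h : f (x + x) = g (x + x)) (hfx : 0 ≤ f x) (hgx : 0 ≤ g x) : f x = g x := by
  rw [hf.map_add_self, hg.map_add_self] at h
  exact (sq_eq_sq₀ hfx hgx).1 (by linear_combination h / 2)

end IsCosineFunction

theorem isCosineFunction_zpow_add_inv {K : Type*} [Field K] [NeZero (2 : K)] {z : K}
    (hz : z ≠ 0) : IsCosineFunction fun k : ℤ => (z ^ k + (z ^ k)⁻¹) / 2 where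
  map_zero := by rw [zpow_zero, inv_one, one_add_one_eq_two, div_self two_ne_zero]
  map_add_add_map_sub s t := by
    simp only [zpow_add₀ hz, zpow_sub₀ hz]
    field_simp
    ring

theorem isCosineFunction_cos_mul (a : ℝ) : IsCosineFunction fun t : ℝ => cos (a * t) where
  map_zero := by simp
  map_add_add_map_sub s t := by
    simp only [mul_add, mul_sub, cos_add, cos_sub]
    ring

theorem exists_ne_zero_add_inv_eq {K : Type*} [Field K] [IsAlgClosed K] [NeZero (2 : K)]
    (w : K) : ∃ z : K, z ≠ 0 ∧ z + z⁻¹ = w := by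
  obtain ⟨z, hz⟩ := exists_quadratic_eq_zero (a := 1) (b := -w) (c := 1) one_ne_zero
    (IsAlgClosed.exists_eq_mul_self _)
  have hz0 : z ≠ 0 := by rintro rfl; simp at hz
  refine ⟨z, hz0, ?_⟩
  field_simp
  linear_combination hz

theorem norm_le_one_of_norm_pow_add_inv_le {K : Type*} [NormedDivisionRing K] {z : K} {M : ℝ}
    (h : ∀ k : ℕ, ‖z ^ k + (z ^ k)⁻¹‖ ≤ M) : ‖z‖ ≤ 1 := by
  by_contra! hz
  obtain ⟨k, hk⟩ := pow_unbounded_of_one_lt (M + 1) hz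
  have hinv : ‖(z ^ k)⁻¹‖ ≤ 1 := by
    rw [norm_inv, norm_pow]
    exact inv_le_one_of_one_le₀ (one_le_pow₀ hz.le)
  have := norm_le_add_norm_add (z ^ k) (z ^ k)⁻¹
  rw [norm_pow] at this
  linarith [h k]

theorem norm_eq_one_of_norm_pow_add_inv_le {K : Type*} [NormedDivisionRing K] {z : K}
    (hz : z ≠ 0) {M : ℝ} (h : ∀ k : ℕ, ‖z ^ k + (z ^ k)⁻¹‖ ≤ M) : ‖z‖ = 1 := by
  have hinv : ‖z⁻¹‖ ≤ 1 := norm_le_one_of_norm_pow_add_inv_le (M := M) fun k => by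
    simpa [inv_pow, add_comm] using h k
  rw [norm_inv, inv_le_one₀ (norm_pos_iff.mpr hz)] at hinv
  exact le_antisymm (norm_le_one_of_norm_pow_add_inv_le h) hinv

theorem eq_of_forall_int_mul_div_two_pow_eq {X : Type*} [TopologicalSpace X] [T2Space X]
    {f g : ℝ → X} (hf : Continuous f) (hg : Continuous g) {δ : ℝ} (hδ : 0 < δ)
    (h : ∀ (n : ℕ) (k : ℤ), f (k * (δ / 2 ^ n)) = g (k * (δ / 2 ^ n))) : f = g := by
  funext t
  have hstep : Tendsto (fun n : ℕ => δ / 2 ^ n) atTop (𝓝 0) :=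
    tendsto_const_nhds.div_atTop (tendsto_pow_atTop_atTop_of_one_lt one_lt_two)
  have hq : Tendsto (fun n : ℕ => ⌊t / (δ / 2 ^ n)⌋ * (δ / 2 ^ n)) atTop (𝓝 t) := by
    refine tendsto_of_tendsto_of_tendsto_of_le_of_le (by simpa using hstep.const_sub t)
      tendsto_const_nhds (fun n => ?_) (fun n => ?_)
    · have hpos : 0 < δ / 2 ^ n := by positivity
      have := Int.lt_floor_add_one (t / (δ / 2 ^ n))
      rw [div_lt_iff₀ hpos] at this
      linarith
    · have hpos : 0 < δ / 2 ^ n := by positivity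
      exact (le_div_iff₀ hpos).1 (Int.floor_le _)
  exact (isClosed_eq hf hg).mem_of_tendsto hq (Eventually.of_forall fun n => h n _)

namespace IsCosineFunction

section Complex

variable {G : Type*} [AddCommGroup G] {c : G → ℂ}

theorem exists_norm_eq_one_eq_re (hc : IsCosineFunction c) (hb : ∃ M, ∀ t, ‖c t‖ ≤ M)
    (t : G) : ∃ z : ℂ, ‖z‖ = 1 ∧ c t = z.re := by
  obtain ⟨M, hM⟩ := hb
  obtain ⟨z, hz0, hz⟩ := exists_ne_zero_add_inv_eq (2 * c t)
  have hcz (k : ℕ) : 2 * c (k • t) = z ^ k + (z ^ k)⁻¹ := by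
    have := (hc.comp (zmultiplesHom G t)).map_nsmul_eq (isCosineFunction_zpow_add_inv hz0)
      (h := 1) (by simp [hz]) k
    simp only [Function.comp_apply, zmultiplesHom_apply, nsmul_eq_mul, mul_one, natCast_zsmul,
      zpow_natCast] at this
    rw [this, mul_div_cancel₀ _ two_ne_zero]
  have hnorm : ‖z‖ = 1 := norm_eq_one_of_norm_pow_add_inv_le hz0 (M := 2 * M) fun k => by
    rw [← hcz, norm_mul, Complex.norm_two]
    linarith [hM (k • t)]
  refine ⟨z, hnorm, ?_⟩
  rw [Complex.inv_eq_conj hnorm, Complex.add_conj] at hz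
  push_cast at hz
  linear_combination -hz / 2

theorem im_eq_zero (hc : IsCosineFunction c) (hb : ∃ M, ∀ t, ‖c t‖ ≤ M) (t : G) :
    (c t).im = 0 := by
  obtain ⟨z, -, hct⟩ := hc.exists_norm_eq_one_eq_re hb t
  rw [hct, Complex.ofReal_im]

theorem abs_re_le_one (hc : IsCosineFunction c) (hb : ∃ M, ∀ t, ‖c t‖ ≤ M) (t : G) :
    |(c t).re| ≤ 1 := by
  obtain ⟨z, hz, hct⟩ := hc.exists_norm_eq_one_eq_re hb t
  rw [hct, Complex.ofReal_re, ← hz]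
  exact Complex.abs_re_le_norm z

theorem re (hc : IsCosineFunction c) (him : ∀ t, (c t).im = 0) :
    IsCosineFunction fun t => (c t).re where
  map_zero := by simp [hc.map_zero]
  map_add_add_map_sub s t := by
    simpa [Complex.mul_re, him] using congrArg Complex.re (hc.map_add_add_map_sub s t)

end Complex

theorem map_div_two_pow_eq {f g : ℝ → ℝ} (hf : IsCosineFunction f) (hg : IsCosineFunction g)
    {δ : ℝ} (hδ : 0 ≤ δ) (hfg : f δ = g δ) (hf0 : ∀ t ∈ Set.Icc 0 δ, 0 ≤ f t)
    (hg0 : ∀ t ∈ Set.Icc 0 δ, 0 ≤ g t) (n : ℕ) : f (δ / 2 ^ n) = g (δ / 2 ^ n) := by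
  induction n with
  | zero => simpa using hfg
  | succ n ih =>
    have hmem : δ / 2 ^ (n + 1) ∈ Set.Icc 0 δ :=
      ⟨by positivity, div_le_self hδ (one_le_pow₀ one_le_two)⟩
    refine hf.eq_of_map_add_self_eq hg ?_ (hf0 _ hmem) (hg0 _ hmem)
    rwa [← two_mul, pow_succ, ← div_div, mul_div_cancel₀ _ two_ne_zero]

theorem exists_eq_cos_mul {f : ℝ → ℝ} (hf : IsCosineFunction f) (hcont : Continuous f)
    (hle : ∀ t, f t ≤ 1) : ∃ a, f = fun t => cos (a * t) := by
  obtain ⟨δ, hδ, hpos⟩ : ∃ δ > 0, ∀ t ∈ Set.Icc 0 δ, 0 ≤ f t := by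
    have : ∀ᶠ t in 𝓝 0, 0 ≤ f t :=
      (hcont.tendsto 0).eventually (eventually_ge_nhds (by rw [hf.map_zero]; exact one_pos))
    exact mem_nhdsGE_iff_exists_Icc_subset.1 (nhdsWithin_le_nhds this)
  have hfδ : 0 ≤ f δ := hpos δ ⟨hδ.le, le_rfl⟩
  set a := arccos (f δ) / δ
  have ha : a * δ = arccos (f δ) := div_mul_cancel₀ _ hδ.ne'
  have hcos : f δ = cos (a * δ) := by rw [ha, cos_arccos (by linarith) (hle δ)]
  have hcos_nonneg : ∀ t ∈ Set.Icc 0 δ, 0 ≤ cos (a * t) := fun t ht => by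
    have ha0 : 0 ≤ a := div_nonneg (arccos_nonneg _) hδ.le
    refine cos_nonneg_of_mem_Icc ⟨by nlinarith [pi_pos, ht.1], ?_⟩
    calc a * t ≤ a * δ := mul_le_mul_of_nonneg_left ht.2 ha0
      _ ≤ π / 2 := ha ▸ arccos_le_pi_div_two.2 hfδ
  have hg := isCosineFunction_cos_mul a
  refine ⟨a, eq_of_forall_int_mul_div_two_pow_eq hcont (by fun_prop) hδ fun n k => ?_⟩
  simpa only [zsmul_eq_mul] using
    hf.map_zsmul_eq hg (hf.map_div_two_pow_eq hg hδ.le hcos hpos hcos_nonneg n) k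

end IsCosineFunction

theorem stmt_5 (c : ℝ → ℂ) (hc0 : c 0 = 1)
    (hc : ∀ s t : ℝ, c (s + t) + c (s - t) = 2 * c s * c t)
    (hb : ∃ M : ℝ, ∀ t : ℝ, ‖c t‖ ≤ M) :
    (∀ t : ℝ, (c t).im = 0 ∧ (c t).re ∈ Set.Icc (-1 : ℝ) 1) ∧
    (Continuous c → ∃ a : ℝ, ∀ t : ℝ, c t = (Real.cos (a * t) : ℝ)) := by
  have hcos : IsCosineFunction c := ⟨hc0, hc⟩
  refine ⟨fun t => ⟨hcos.im_eq_zero hb t, abs_le.1 (hcos.abs_re_le_one hb t)⟩, fun hcont => ?_⟩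
  obtain ⟨a, ha⟩ := (hcos.re (hcos.im_eq_zero hb)).exists_eq_cos_mul
    (Complex.continuous_re.comp hcont) fun t => (le_abs_self _).trans (hcos.abs_re_le_one hb t)
  exact ⟨a, fun t => Complex.ext (by rw [Complex.ofReal_re, ← congrFun ha t])
    (by rw [Complex.ofReal_im, hcos.im_eq_zero hb t])⟩
end

section
/- Let A be a commutative unital Banach algebra, and let x, y ∈ A be quasinilpotent elements. If λ ∈ ℂ with λ ∉ πℤ and cos(λ·1_A + x) = cos(λ·1_A + y), then x = y. -/
/-- The cosine of an element of a complex Banach algebra, defined by the usual power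
series `cos x = ∑ (-1)^n x^(2n) / (2n)!`. -/
noncomputable def algCos {A : Type*} [NormedRing A] [NormedAlgebra ℂ A] [CompleteSpace A]
    (x : A) : A :=
  ∑' n : ℕ, (((-1 : ℂ) ^ n / ((2 * n).factorial : ℂ))) • x ^ (2 * n)

/-!
Put `u = i(λ + x)` and `v = i(λ + y)`. The hypothesis reads `e^u + e^{-u} = e^v + e^{-v}`, which
factors as `(e^u e^v - 1)(e^u - e^v) = 0`. Characters kill the quasinilpotents `x` and `y`, so they
send `e^u e^v - 1` to `e^{2iλ} - 1 ≠ 0`; this factor is therefore invertible and `e^u = e^v`.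
Finally `exp` is injective on elements with the same Gelfand transform: if `e^z = 1` and every
character vanishes at `z`, then `z · ∑ zⁿ/(n+1)! = 0`, and the sum is invertible because every
character sends it to `1`.
-/

open NormedSpace WeakDual
open Complex (I I_ne_zero I_sq)

namespace WeakDual.CharacterSpace

variable {A : Type*} [NormedCommRing A] [NormedAlgebra ℂ A]

theorem apply_eq_zero_of_spectralRadius_eq_zero {x : A} (hx : spectralRadius ℂ x = 0)
    (φ : characterSpace ℂ A) : φ x = 0 := by
  have h : (‖φ x‖₊ : ENNReal) ≤ spectralRadius ℂ x :=
    le_iSup₂ (f := fun k (_ : k ∈ spectrum ℂ x) => (‖k‖₊ : ENNReal)) (φ x)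
      (AlgHom.apply_mem_spectrum φ x)
  simpa [hx] using h

theorem isUnit_of_forall_apply_ne_zero [CompleteSpace A] {a : A}
    (h : ∀ φ : characterSpace ℂ A, φ a ≠ 0) : IsUnit a :=
  of_not_not fun ha => (exists_apply_eq_zero ha).elim h

end WeakDual.CharacterSpace

theorem two_smul_algCos {A : Type*} [NormedRing A] [NormedAlgebra ℂ A] [CompleteSpace A]
    (x : A) : (2 : ℂ) • algCos x = exp (I • x) + exp (-(I • x)) := by
  have hexp : HasSum (fun n => (n.factorial : ℂ)⁻¹ • ((I ^ n + (-I) ^ n) • x ^ n))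
      (exp (I • x) + exp (-(I • x))) := by
    simpa only [← neg_smul, smul_pow, add_smul, smul_add] using
      (exp_series_hasSum_exp' (𝕂 := ℂ) (I • x)).add (exp_series_hasSum_exp' (𝕂 := ℂ) (-I • x))
  have hodd : ∀ n ∉ Set.range (2 * ·),
      (n.factorial : ℂ)⁻¹ • ((I ^ n + (-I) ^ n) • x ^ n) = 0 := by
    intro n hn
    obtain ⟨k, rfl⟩ : Odd n := by simpa [Nat.not_even_iff_odd] using hn
    simp [pow_succ, pow_mul]
  rw [algCos, ← tsum_const_smul'' (2 : ℂ), ← ((mul_right_injective₀ two_ne_zero).hasSum_iff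
    hodd).mpr hexp |>.tsum_eq]
  congr 1 with k
  simp only [Function.comp, pow_mul, I_sq, neg_sq, smul_smul]
  congr 1
  ring

section ExpSeries

variable {A : Type*} [NormedRing A] [NormedAlgebra ℂ A] [CompleteSpace A]

theorem summable_inv_factorial_succ_smul_pow (z : A) :
    Summable fun n : ℕ => ((n + 1).factorial : ℂ)⁻¹ • z ^ n := by
  refine .of_norm_bounded (norm_expSeries_summable' (𝕂 := ℂ) z) fun n => ?_
  rw [norm_smul, norm_smul]
  gcongr
  simp only [norm_inv, Complex.norm_natCast]
  gcongr
  exact n.le_succ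

theorem exp_eq_one_add_mul_tsum (z : A) :
    exp z = 1 + z * ∑' n : ℕ, ((n + 1).factorial : ℂ)⁻¹ • z ^ n := by
  have h := (hasSum_nat_add_iff' 1).mpr (exp_series_hasSum_exp' (𝕂 := ℂ) z)
  simp only [Finset.range_one, Finset.sum_singleton, pow_zero, Nat.factorial_zero, Nat.cast_one,
    inv_one, one_smul, pow_succ', ← mul_smul_comm] at h
  rw [((summable_inv_factorial_succ_smul_pow z).hasSum.mul_left z).unique h, add_sub_cancel]

end ExpSeries

section Exp

variable {A : Type*} [NormedCommRing A] [NormedAlgebra ℂ A] [CompleteSpace A]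

theorem eq_zero_of_exp_eq_one {z : A} (hz : ∀ φ : characterSpace ℂ A, φ z = 0)
    (h : exp z = 1) : z = 0 := by
  set g := ∑' n : ℕ, ((n + 1).factorial : ℂ)⁻¹ • z ^ n
  have hg : IsUnit g := CharacterSpace.isUnit_of_forall_apply_ne_zero fun φ => by
    have hφg := (summable_inv_factorial_succ_smul_pow z).hasSum.map φ (map_continuous φ)
    have h1 : HasSum (fun n : ℕ => φ (((n + 1).factorial : ℂ)⁻¹ • z ^ n)) 1 := by
      convert hasSum_single 0 fun n hn => ?_
      · simp
      · simp [hz φ, hn]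
    rw [hφg.unique h1]
    exact one_ne_zero
  rw [exp_eq_one_add_mul_tsum, add_eq_left] at h
  exact hg.mul_left_eq_zero.mp h

theorem eq_of_exp_eq {a b : A} (hab : ∀ φ : characterSpace ℂ A, φ a = φ b)
    (h : exp a = exp b) : a = b := by
  let +nondep : NormedAlgebra ℚ A := .restrictScalars ℚ ℂ A
  refine sub_eq_zero.mp (eq_zero_of_exp_eq_one (fun φ => by rw [map_sub, hab, sub_self]) ?_)
  rw [sub_eq_add_neg, NormedSpace.exp_add, h, ← NormedSpace.exp_add, add_neg_cancel, exp_zero]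

end Exp

theorem mul_sub_one_mul_sub_eq_zero_of_add_eq_add {R : Type*} [CommRing R] {a a' b b' : R}
    (ha : a * a' = 1) (hb : b * b' = 1) (h : a + a' = b + b') : (a * b - 1) * (a - b) = 0 := by
  linear_combination (a * b) * h - b * ha + a * hb

theorem Complex.exp_two_mul_mul_I_ne_one {l : ℂ} (hl : ∀ k : ℤ, l ≠ Real.pi * k) :
    Complex.exp (2 * l * I) ≠ 1 := by
  rw [Ne, exp_eq_one_iff]
  rintro ⟨k, hk⟩
  refine hl k (mul_left_cancel₀ (mul_ne_zero two_ne_zero I_ne_zero) ?_)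
  linear_combination hk

theorem stmt_6 {A : Type*} [NormedCommRing A] [NormedAlgebra ℂ A] [CompleteSpace A]
    (x y : A) (hx : spectralRadius ℂ x = 0) (hy : spectralRadius ℂ y = 0)
    (l : ℂ) (hl : ∀ k : ℤ, l ≠ (Real.pi : ℂ) * k)
    (h : algCos (algebraMap ℂ A l + x) = algCos (algebraMap ℂ A l + y)) :
    x = y := by
  let +nondep : NormedAlgebra ℚ A := .restrictScalars ℚ ℂ A
  set u := I • (algebraMap ℂ A l + x)
  set v := I • (algebraMap ℂ A l + y)
  have hφ (φ : characterSpace ℂ A) : φ u = I * l ∧ φ v = I * l := by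
    simp [u, v, AlgHomClass.commutes, CharacterSpace.apply_eq_zero_of_spectralRadius_eq_zero hx,
      CharacterSpace.apply_eq_zero_of_spectralRadius_eq_zero hy]
  have hexp_neg (w : A) : exp w * exp (-w) = 1 := by
    rw [← NormedSpace.exp_add, add_neg_cancel, exp_zero]
  have hcos : exp u + exp (-u) = exp v + exp (-v) := by
    rw [← two_smul_algCos, ← two_smul_algCos, h]
  have hunit : IsUnit (exp u * exp v - 1) :=
    CharacterSpace.isUnit_of_forall_apply_ne_zero fun φ => by
      rw [map_sub, map_mul, map_one, map_exp φ (map_continuous φ), map_exp φ (map_continuous φ),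
        (hφ φ).1, (hφ φ).2, ← Complex.exp_eq_exp_ℂ, ← Complex.exp_add, sub_ne_zero]
      convert Complex.exp_two_mul_mul_I_ne_one hl using 2
      ring
  have hexp : exp u = exp v := sub_eq_zero.mp <| hunit.mul_right_eq_zero.mp <|
    mul_sub_one_mul_sub_eq_zero_of_add_eq_add (hexp_neg u) (hexp_neg v) hcos
  simpa [u, v, I_ne_zero] using eq_of_exp_eq (fun φ => (hφ φ).1.trans (hφ φ).2.symm) hexp
end

section
/- Let A be a commutative unital Banach algebra, and let x, y ∈ A be quasinilpotent. If λ ∈ πℤ and cos(λ·1_A + x) = cos(λ·1_A + y), then x² = y². -/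
/-!
Write `u = exp (i x)`, `v = exp (i y)`. Since `cos (λ + z) = ± cos z` for `λ ∈ πℤ`, the hypothesis
says `u + u⁻¹ = v + v⁻¹`, which rearranges to `(u v - 1) (u v⁻¹ - 1) = 0`, that is
`(exp (i (x + y)) - 1) (exp (i (x - y)) - 1) = 0`. Now `exp w - 1 = w · E(w)` with
`E(z) = (eᶻ - 1) / z`, and `E(w)` is invertible when `w` is quasinilpotent, because every
character sends it to `E(0) = 1`. Cancelling these units leaves `-(x + y) (x - y) = 0`.
-/

open NormedSpace WeakDual
open Complex (I)

section NormedRing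

variable {A : Type*} [NormedRing A] [NormedAlgebra ℂ A] [CompleteSpace A]

noncomputable def expSubOneDiv (w : A) : A :=
  ∑' n : ℕ, ((n + 1).factorial : ℂ)⁻¹ • w ^ n

theorem summable_expSubOneDiv (w : A) :
    Summable fun n : ℕ => ((n + 1).factorial : ℂ)⁻¹ • w ^ n := by
  refine Summable.of_norm_bounded (norm_expSeries_summable' (𝕂 := ℂ) w) fun n => ?_
  rw [norm_smul, norm_smul, norm_inv, norm_inv, Complex.norm_natCast, Complex.norm_natCast]
  gcongr
  omega

theorem exp_eq_one_add_mul_expSubOneDiv (w : A) : exp w = 1 + w * expSubOneDiv w := by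
  rw [← (exp_series_hasSum_exp' (𝕂 := ℂ) w).tsum_eq,
    (expSeries_summable' (𝕂 := ℂ) w).tsum_eq_zero_add, expSubOneDiv,
    ← (summable_expSubOneDiv w).tsum_mul_left]
  simp only [pow_succ', mul_smul_comm, Nat.factorial_zero, Nat.cast_one, inv_one, pow_zero,
    one_smul]

theorem algCos_eq_exp (x : A) :
    algCos x = (2 : ℂ)⁻¹ • (exp (I • x) + exp (-(I • x))) := by
  set F : ℕ → A := fun n => ((2 : ℂ)⁻¹ * ((n.factorial : ℂ)⁻¹ * (I ^ n + (-I) ^ n))) • x ^ n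
  have hF : HasSum F ((2 : ℂ)⁻¹ • (exp (I • x) + exp (-(I • x)))) := by
    convert ((exp_series_hasSum_exp' (𝕂 := ℂ) (I • x)).add
      (exp_series_hasSum_exp' (𝕂 := ℂ) (-(I • x)))).const_smul (2 : ℂ)⁻¹ using 2 with n
    simp only [F, ← neg_smul, smul_pow, smul_smul, ← add_smul]
    congr 1
    ring
  have hodd : ∀ n ∉ Set.range (2 * ·), F n = 0 := by
    rintro n hn
    obtain ⟨k, rfl⟩ : Odd n := Nat.not_even_iff_odd.mp fun ⟨k, hk⟩ => hn ⟨k, by simp only; omega⟩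
    simp [F, Odd.neg_pow ⟨k, rfl⟩]
  rw [← (mul_right_injective₀ two_ne_zero).hasSum_iff hodd] at hF
  have hcos :
      F ∘ (2 * ·) = fun k : ℕ => ((-1 : ℂ) ^ k / ((2 * k).factorial : ℂ)) • x ^ (2 * k) := by
    funext k
    simp only [F, Function.comp_apply, pow_mul, neg_sq, Complex.I_sq]
    ring_nf
  rw [hcos] at hF
  exact hF.tsum_eq

end NormedRing

theorem apply_eq_zero_of_spectralRadius_eq_zero {𝕜 A F : Type*} [NormedField 𝕜] [Ring A]
    [Algebra 𝕜 A] [FunLike F A 𝕜] [AlgHomClass F 𝕜 A 𝕜] (φ : F) {a : A}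
    (ha : spectralRadius 𝕜 a = 0) : φ a = 0 := by
  have hle : (‖φ a‖₊ : ENNReal) ≤ spectralRadius 𝕜 a :=
    le_iSup₂ (f := fun k (_ : k ∈ spectrum 𝕜 a) => (‖k‖₊ : ENNReal)) (φ a)
      (AlgHom.apply_mem_spectrum φ a)
  simpa [ha] using hle

section NormedCommRing

variable {A : Type*} [NormedCommRing A] [NormedAlgebra ℂ A] [CompleteSpace A]

-- `exp` does not depend on the `ℚ`-algebra structure, so the one restricted from `ℂ` will do.
theorem exp_add_of_normedAlgebra_complex (x y : A) : exp (x + y) = exp x * exp y :=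
  letI : NormedAlgebra ℚ A := .restrictScalars ℚ ℂ A
  exp_add

theorem exp_algebraMap_add (c : ℂ) (z : A) :
    exp (algebraMap ℂ A c + z) = Complex.exp c • exp z := by
  rw [exp_add_of_normedAlgebra_complex, ← algebraMap_exp_comm, Complex.exp_eq_exp_ℂ,
    Algebra.smul_def]

theorem algCos_algebraMap_pi_mul_intCast_add (k : ℤ) (x : A) :
    algCos (algebraMap ℂ A (Real.pi * k) + x) = ((-1 : ℂ) ^ k) • algCos x := by
  have hexp : Complex.exp (I * (Real.pi * k)) = (-1) ^ k := by
    rw [show I * (Real.pi * k) = k * (Real.pi * I) by ring, Complex.exp_int_mul,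
      Complex.exp_pi_mul_I]
  have hexp_neg : Complex.exp (-I * (Real.pi * k)) = (-1) ^ k := by
    rw [neg_mul, Complex.exp_neg, hexp, ← inv_zpow, inv_neg_one]
  have hsmul : ∀ s : ℂ, s • (algebraMap ℂ A (Real.pi * k) + x) =
      algebraMap ℂ A (s * (Real.pi * k)) + s • x := by
    intro s
    rw [smul_add, Algebra.smul_def, ← map_mul]
  rw [algCos_eq_exp, algCos_eq_exp, ← neg_smul, hsmul, hsmul, exp_algebraMap_add,
    exp_algebraMap_add, hexp, hexp_neg, neg_smul, ← smul_add, smul_comm]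

theorem exp_add_sub_one_mul_exp_sub_sub_one_eq_zero_of_algCos_eq {x y : A}
    (h : algCos x = algCos y) : (exp (I • (x + y)) - 1) * (exp (I • (x - y)) - 1) = 0 := by
  have hinv : ∀ z : A, exp z * exp (-z) = 1 := fun z => by
    rw [← exp_add_of_normedAlgebra_complex, add_neg_cancel, exp_zero]
  rw [algCos_eq_exp, algCos_eq_exp, smul_right_inj (by norm_num)] at h
  rw [smul_add, smul_sub, sub_eq_add_neg (I • x), exp_add_of_normedAlgebra_complex,
    exp_add_of_normedAlgebra_complex]
  linear_combination exp (I • x) * h + exp (I • x) ^ 2 * hinv (I • y) - hinv (I • x)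

theorem CharacterSpace.apply_expSubOneDiv (φ : characterSpace ℂ A) {w : A} (hw : φ w = 0) :
    φ (expSubOneDiv w) = 1 := by
  have h := (summable_expSubOneDiv w).hasSum.map φ (map_continuous φ)
  refine h.unique ?_
  convert hasSum_ite_eq 0 (1 : ℂ) with n
  cases n <;> simp [hw]

theorem isUnit_expSubOneDiv {w : A} (hw : ∀ φ : characterSpace ℂ A, φ w = 0) :
    IsUnit (expSubOneDiv w) := by
  by_contra hw'
  obtain ⟨φ, hφ⟩ := CharacterSpace.exists_apply_eq_zero hw'
  simp [CharacterSpace.apply_expSubOneDiv φ (hw φ)] at hφ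

end NormedCommRing

theorem stmt_7 {A : Type*} [NormedCommRing A] [NormedAlgebra ℂ A] [CompleteSpace A]
    (x y : A) (hx : spectralRadius ℂ x = 0) (hy : spectralRadius ℂ y = 0)
    (l : ℂ) (hl : ∃ k : ℤ, l = (Real.pi : ℂ) * k)
    (h : algCos (algebraMap ℂ A l + x) = algCos (algebraMap ℂ A l + y)) :
    x ^ 2 = y ^ 2 := by
  obtain ⟨k, rfl⟩ := hl
  have hcos : algCos x = algCos y := by
    rwa [algCos_algebraMap_pi_mul_intCast_add, algCos_algebraMap_pi_mul_intCast_add,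
      smul_right_inj (zpow_ne_zero k (by norm_num))] at h
  have hφx := fun φ : characterSpace ℂ A => apply_eq_zero_of_spectralRadius_eq_zero φ hx
  have hφy := fun φ : characterSpace ℂ A => apply_eq_zero_of_spectralRadius_eq_zero φ hy
  have hunit_add := isUnit_expSubOneDiv (w := I • (x + y)) fun φ => by simp [hφx φ, hφy φ]
  have hunit_sub := isUnit_expSubOneDiv (w := I • (x - y)) fun φ => by simp [hφx φ, hφy φ]
  have h0 := exp_add_sub_one_mul_exp_sub_sub_one_eq_zero_of_algCos_eq hcos
  rw [exp_eq_one_add_mul_expSubOneDiv, exp_eq_one_add_mul_expSubOneDiv, add_sub_cancel_left,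
    add_sub_cancel_left, mul_mul_mul_comm, smul_mul_smul_comm, Complex.I_mul_I, neg_one_smul,
    (hunit_add.mul hunit_sub).mul_left_eq_zero, neg_eq_zero] at h0
  linear_combination h0
end

section
/- Let (c(t))_{t∈ℝ} be a bounded complex cosine function that is discontinuous. Then for every α ∈ [−1, 1] there exists a sequence (t_n) of positive reals with t_n → 0 and c(t_n) → α. -/
/-!
A bounded cosine function is real with values in `[-1, 1]`: writing `c t = cos z`, the Chebyshev
identity `c (n * t) = T_n (c t) = cos (n * z)` stays bounded only if `z` is real.

Let `Θ` be the set of angles `θ` such that `cos θ` is a cluster value of `c` at `0⁺`. It is closed,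
stable under `θ ↦ n * θ` (as `c (n * t) = T_n (c t)`), and by compactness, applied along `t / n`,
every `θ ∈ Θ` has some `φ ∈ Θ` with `cos (n * φ) = cos θ`. Discontinuity means `c t ↛ 1` as
`t → 0⁺`, so `Θ` contains an angle outside `2πℤ`. If `Θ` missed an interval `(0, ε)`, Dirichlet's
approximation theorem would give `cos (N! * θ) = 1` for all `θ ∈ Θ`, which is absurd for the
`N!`-th "root" of an angle outside `2πℤ`. So `Θ` has arbitrarily small positive elements, whose
multiples make `Θ` dense, hence `Θ = ℝ`.
-/

open Filter Topology Set Polynomial Real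

theorem map_nsmul_eq_eval_chebyshevT {G R : Type*} [AddCommGroup G] [CommRing R] {c : G → R}
    (hc0 : c 0 = 1) (hc : ∀ s t, c (s + t) + c (s - t) = 2 * c s * c t) (n : ℕ) (t : G) :
    c (n • t) = (Chebyshev.T R n).eval (c t) := by
  induction n using Nat.twoStepInduction with
  | zero => simp [hc0]
  | one => simp
  | more n ih₀ ih₁ =>
    have h := hc ((n + 1) • t) t
    rw [← succ_nsmul, succ_nsmul t n, add_sub_cancel_right, ← succ_nsmul] at h
    push_cast at ih₁ ⊢
    rw [Chebyshev.T_add_two]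
    simp only [eval_sub, eval_mul, eval_X, eval_ofNat]
    rw [← ih₀, ← ih₁]
    linear_combination h

theorem dAlembert_sub_sq {G R : Type*} [AddCommGroup G] [Field R] [CharZero R] {c : G → R}
    (hc0 : c 0 = 1) (hc : ∀ s t, c (s + t) + c (s - t) = 2 * c s * c t) (s t : G) :
    (c s - c t) ^ 2 = (1 - c (s - t)) * (1 - c (s + t)) := by
  have h₁ := hc s t
  have h₂ := hc (s + t) (s - t)
  have h₃ := hc s s
  have h₄ := hc t t
  rw [show s + t + (s - t) = s + s by abel, show s + t - (s - t) = t + t by abel] at h₂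
  rw [sub_self, hc0] at h₃ h₄
  linear_combination h₁ + h₂ / 2 - h₃ / 2 - h₄ / 2

theorem Complex.abs_sinh_im_le_norm_cos (z : ℂ) : |Real.sinh z.im| ≤ ‖Complex.cos z‖ := by
  have h : ‖Complex.cos z‖ ^ 2 = Real.cos z.re ^ 2 + Real.sinh z.im ^ 2 := by
    rw [Complex.sq_norm, Complex.normSq_apply, Complex.cos_eq]
    simp only [← ofReal_cos, ← ofReal_cosh, ← ofReal_sin, ← ofReal_sinh, sub_re, mul_re, ofReal_re,
      ofReal_im, mul_zero, sub_zero, I_re, mul_im, zero_mul, add_zero, I_im, mul_one, sub_self,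
      sub_im, zero_sub, mul_neg, neg_mul, neg_neg]
    nlinarith [Real.cosh_sq z.im, Real.sin_sq_add_cos_sq z.re]
  rw [← abs_norm]
  exact sq_le_sq.mp (by nlinarith [sq_nonneg (Real.cos z.re)])

theorem tendsto_const_mul_nhdsGT_zero {a : ℝ} (ha : 0 < a) :
    Tendsto (a * ·) (𝓝[>] 0) (𝓝[>] 0) := by
  simpa only [comap_mulLeft_nhdsGT_zero ha] using tendsto_comap (f := (a * ·)) (x := 𝓝[>] 0)

theorem IsCompact.exists_mapClusterPt_of_comp {ι X Y : Type*} [TopologicalSpace X]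
    [TopologicalSpace Y] [T2Space Y] {K : Set X} (hK : IsCompact K) {l : Filter ι} {u : ι → X}
    (hu : ∀ᶠ i in l, u i ∈ K) {g : X → Y} (hg : Continuous g) {y : Y}
    (h : MapClusterPt y l (g ∘ u)) : ∃ x ∈ K, MapClusterPt x l u ∧ g x = y := by
  obtain ⟨U, hUl, hUy⟩ := mapClusterPt_iff_ultrafilter.1 h
  obtain ⟨x, hxK, hUx⟩ := hK.ultrafilter_le_nhds (U.map u) (le_principal_iff.2 (hUl hu))
  exact ⟨x, hxK, mapClusterPt_iff_ultrafilter.2 ⟨U, hUl, hUx⟩,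
    tendsto_nhds_unique ((hg.tendsto x).comp hUx) hUy⟩

theorem MapClusterPt.exists_seq_pos {X : Type*} [TopologicalSpace X] [FirstCountableTopology X]
    {f : ℝ → X} {a : X} (h : MapClusterPt a (𝓝[>] 0) f) :
    ∃ t : ℕ → ℝ, (∀ n, 0 < t n) ∧ Tendsto t atTop (𝓝 0) ∧ Tendsto (f ∘ t) atTop (𝓝 a) := by
  obtain ⟨ψ, hfψ, hψ⟩ := h.exists_seq_tendsto
  obtain ⟨hψ0, hψpos⟩ := tendsto_nhdsWithin_iff.1 hψ
  obtain ⟨N, hN⟩ := eventually_atTop.1 hψpos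
  exact ⟨fun n ↦ ψ (n + N), fun n ↦ hN _ (Nat.le_add_left N n),
    (tendsto_add_atTop_iff_nat N).2 hψ0, (tendsto_add_atTop_iff_nat N).2 hfψ⟩

theorem isCompact_range_ofReal_cos : IsCompact (range fun x : ℝ ↦ (Real.cos x : ℂ)) := by
  rw [range_comp' Complex.ofReal Real.cos, Real.range_cos]
  exact isCompact_Icc.image Complex.continuous_ofReal

section CosSaturated

variable {X : Set ℝ} (hcos : ∀ x ∈ X, ∀ y, Real.cos y = Real.cos x → y ∈ X)
  (hmul : ∀ x ∈ X, ∀ n : ℕ, 0 < n → n * x ∈ X)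
include hcos hmul

theorem exists_forall_cos_nat_mul_eq_one_of_forall_notMem_Ioo {ε : ℝ} (hε : 0 < ε)
    (hgap : ∀ x ∈ X, x ∉ Ioo 0 ε) : ∃ D : ℕ, 0 < D ∧ ∀ x ∈ X, Real.cos (D * x) = 1 := by
  obtain ⟨N, hN⟩ := exists_nat_gt (2 * π / ε)
  have hN0 : 0 < N := Nat.cast_pos.1 ((div_pos Real.two_pi_pos hε).trans hN)
  refine ⟨N.factorial, N.factorial_pos, fun x hx ↦ ?_⟩
  obtain ⟨k, hk0, hkN, hk⟩ := Real.exists_nat_abs_mul_sub_round_le (x / (2 * π)) hN0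
  set y := k * x - round (k * (x / (2 * π))) * (2 * π) with hy_def
  have hy_cos : Real.cos |y| = Real.cos (k * x) := by
    rw [Real.cos_abs, Real.cos_sub_int_mul_two_pi]
  have hy_small : |y| < ε := calc
    |y| = 2 * π * |k * (x / (2 * π)) - round (k * (x / (2 * π)))| := by
      rw [← abs_of_pos Real.two_pi_pos, ← abs_mul, abs_of_pos Real.two_pi_pos, hy_def]
      field_simp
    _ ≤ 2 * π * (1 / (N + 1)) := by gcongr
    _ < ε := by
      rw [div_lt_iff₀ hε] at hN
      rw [mul_one_div, div_lt_iff₀ (by positivity)]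
      linarith
  have hy0 : y = 0 := by
    by_contra hy
    exact hgap _ (hcos _ (hmul x hx k hk0) _ hy_cos) ⟨abs_pos.2 hy, hy_small⟩
  have hkx : Real.cos (k * x) = 1 := by rw [← hy_cos, hy0, abs_zero, Real.cos_zero]
  obtain ⟨m, hm⟩ := Nat.dvd_factorial hk0 hkN
  have hTm := Chebyshev.T_real_cos (k * x) m
  rw [hkx, Chebyshev.T_eval_one] at hTm
  rw [hm, Nat.cast_mul, mul_comm (k : ℝ), mul_assoc]
  exact_mod_cast hTm.symm

variable (hdiv : ∀ x ∈ X, ∀ q : ℕ, 0 < q → ∃ y ∈ X, Real.cos (q * y) = Real.cos x)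
  (hne : ∃ x ∈ X, Real.cos x ≠ 1)
include hdiv hne

theorem exists_mem_Ioo_zero_of_exists_cos_nat_mul_eq {ε : ℝ} (hε : 0 < ε) :
    ∃ x ∈ X, x ∈ Ioo 0 ε := by
  by_contra! hgap
  obtain ⟨D, hD, hDX⟩ := exists_forall_cos_nat_mul_eq_one_of_forall_notMem_Ioo hcos hmul hε hgap
  obtain ⟨x, hx, hx1⟩ := hne
  obtain ⟨y, hy, hyx⟩ := hdiv x hx D hD
  exact hx1 (hyx ▸ hDX y hy)

theorem dense_of_exists_cos_nat_mul_eq : Dense X := by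
  rw [Metric.dense_iff]
  intro y r hr
  obtain ⟨x, hx, hx0, hxr⟩ := exists_mem_Ioo_zero_of_exists_cos_nat_mul_eq hcos hmul hdiv hne hr
  set n := ⌊|y| / x⌋₊ + 1
  have hn_gt : |y| < n * x := by
    rw [← div_lt_iff₀ hx0]; exact_mod_cast Nat.lt_floor_add_one _
  have hn_le : n * x ≤ |y| + x := by
    have := Nat.floor_le (div_nonneg (abs_nonneg y) hx0.le)
    rw [le_div_iff₀ hx0] at this
    push_cast [n]; linarith
  have hnx : n * x ∈ X := hmul x hx n (Nat.succ_pos _)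
  rcases le_total 0 y with hy | hy
  · rw [abs_of_nonneg hy] at hn_gt hn_le
    exact ⟨n * x, by rw [Metric.mem_ball, Real.dist_eq, abs_lt]; constructor <;> linarith, hnx⟩
  · rw [abs_of_nonpos hy] at hn_gt hn_le
    refine ⟨-(n * x), ?_, hcos _ hnx _ (Real.cos_neg _)⟩
    rw [Metric.mem_ball, Real.dist_eq, abs_lt]; constructor <;> linarith

end CosSaturated

def clusterAngles (c : ℝ → ℂ) : Set ℝ := {x | MapClusterPt (Real.cos x : ℂ) (𝓝[>] 0) c}

theorem isClosed_clusterAngles (c : ℝ → ℂ) : IsClosed (clusterAngles c) :=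
  isClosed_setOfPred_clusterPt.preimage (by fun_prop)

section CosineFunction

variable {c : ℝ → ℂ} (hc0 : c 0 = 1) (hc : ∀ s t, c (s + t) + c (s - t) = 2 * c s * c t)
include hc0 hc

theorem map_nat_mul_eq_cos (n : ℕ) {t : ℝ} {z : ℂ} (hz : Complex.cos z = c t) :
    c (n * t) = Complex.cos (n * z) := by
  rw [← nsmul_eq_mul, map_nsmul_eq_eval_chebyshevT hc0 hc, ← hz]
  exact_mod_cast Chebyshev.T_complex_cos z n

theorem mem_range_cos_of_bounded {M : ℝ} (hM : ∀ t, ‖c t‖ ≤ M) (t : ℝ) :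
    c t ∈ range (fun x : ℝ ↦ (Real.cos x : ℂ)) := by
  obtain ⟨z, hz⟩ := Complex.cos_surjective (c t)
  have him : z.im = 0 := by
    by_contra hne
    obtain ⟨n, hn⟩ := exists_nat_gt (M / |z.im|)
    have hsinh : n * |z.im| ≤ M := calc
      (n : ℝ) * |z.im| = |(n * z).im| := by simp
      _ ≤ |Real.sinh (n * z).im| := by
        rw [Real.abs_sinh]; exact Real.self_le_sinh_iff.mpr (abs_nonneg _)
      _ ≤ ‖c (n * t)‖ := by
        rw [map_nat_mul_eq_cos hc0 hc n hz]; exact Complex.abs_sinh_im_le_norm_cos _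
      _ ≤ M := hM _
    rw [div_lt_iff₀ (abs_pos.mpr hne)] at hn
    linarith
  refine ⟨z.re, ?_⟩
  simp only [Complex.ofReal_cos, ← hz]
  exact congrArg Complex.cos (Complex.ext rfl (by simp [him]))

theorem continuous_of_tendsto_nhdsGT {M : ℝ} (hM : ∀ t, ‖c t‖ ≤ M)
    (h : Tendsto c (𝓝[>] 0) (𝓝 1)) : Continuous c := by
  have heven : ∀ t, c |t| = c t := by
    intro t
    rcases abs_choice t with ht | ht <;> rw [ht]
    have h := hc 0 t
    rw [zero_add, zero_sub, hc0] at h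
    linear_combination h
  have hzero : Tendsto (fun t ↦ 1 - c t) (𝓝 0) (𝓝 0) := by
    have hright : ContinuousWithinAt c (Ici 0) 0 := by
      rw [← continuousWithinAt_Ioi_iff_Ici, ContinuousWithinAt, hc0]; exact h
    have habs : Tendsto abs (𝓝 (0 : ℝ)) (𝓝[≥] 0) :=
      tendsto_nhdsWithin_iff.2 ⟨continuous_abs.tendsto' 0 0 abs_zero, .of_forall abs_nonneg⟩
    have := hright.tendsto.comp habs
    simp only [Function.comp_def, heven, hc0] at this
    simpa using this.const_sub 1
  rw [continuous_iff_continuousAt]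
  intro s
  rw [ContinuousAt, tendsto_iff_norm_sub_tendsto_zero]
  have hbound : ∀ t, ‖c t - c s‖ ≤ √((1 + M) * ‖1 - c (s - t)‖) := by
    intro t
    apply Real.le_sqrt_of_sq_le
    calc ‖c t - c s‖ ^ 2 = ‖1 - c (s - t)‖ * ‖1 - c (s + t)‖ := by
          rw [← norm_pow, ← norm_mul, ← dAlembert_sub_sq hc0 hc, ← neg_sub, neg_sq]
      _ ≤ ‖1 - c (s - t)‖ * (1 + M) := by
          gcongr
          exact (norm_sub_le _ _).trans (by rw [norm_one]; linarith [hM (s + t)])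
      _ = (1 + M) * ‖1 - c (s - t)‖ := mul_comm _ _
  refine squeeze_zero (fun _ ↦ norm_nonneg _) hbound ?_
  have hlim : Tendsto (fun t ↦ s - t) (𝓝 s) (𝓝 0) := by
    simpa using (continuous_sub_left s).tendsto s
  simpa using ((hzero.comp hlim).norm.const_mul (1 + M)).sqrt

theorem eval_chebyshevT_comp (n : ℕ) : (fun t ↦ (Chebyshev.T ℂ n).eval (c t)) = c ∘ (n * ·) := by
  ext t
  simp [← nsmul_eq_mul, map_nsmul_eq_eval_chebyshevT hc0 hc]

theorem nat_mul_mem_clusterAngles {x : ℝ} (hx : x ∈ clusterAngles c) {n : ℕ} (hn : 0 < n) :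
    n * x ∈ clusterAngles c := by
  have h := hx.continuousAt_comp (Chebyshev.T ℂ n).continuous.continuousAt
  rw [Function.comp_def, eval_chebyshevT_comp hc0 hc, Complex.ofReal_cos,
    Chebyshev.T_complex_cos] at h
  exact_mod_cast h.of_comp (tendsto_const_mul_nhdsGT_zero (Nat.cast_pos.2 hn))

theorem exists_mem_clusterAngles_cos_nat_mul_eq {M : ℝ} (hM : ∀ t, ‖c t‖ ≤ M) {x : ℝ}
    (hx : x ∈ clusterAngles c) {q : ℕ} (hq : 0 < q) :
    ∃ y ∈ clusterAngles c, Real.cos (q * y) = Real.cos x := by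
  have hq' : (0 : ℝ) < q := Nat.cast_pos.2 hq
  have h : MapClusterPt (Real.cos x : ℂ) (𝓝[>] 0) (c ∘ (q * ·)) := by
    refine MapClusterPt.of_comp (tendsto_const_mul_nhdsGT_zero (inv_pos.2 hq')) ?_
    have hcomp : (c ∘ (q * ·)) ∘ ((q : ℝ)⁻¹ * ·) = c := by
      ext t; simp [mul_inv_cancel_left₀ hq'.ne']
    rwa [hcomp]
  rw [← eval_chebyshevT_comp hc0 hc] at h
  obtain ⟨_, ⟨y, rfl⟩, hy, hTy⟩ := isCompact_range_ofReal_cos.exists_mapClusterPt_of_comp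
    (.of_forall (mem_range_cos_of_bounded hc0 hc hM)) (Chebyshev.T ℂ q).continuous h
  refine ⟨y, hy, ?_⟩
  simp only [Complex.ofReal_cos, Chebyshev.T_complex_cos] at hTy
  exact_mod_cast hTy

theorem exists_mem_clusterAngles_cos_ne_one {M : ℝ} (hM : ∀ t, ‖c t‖ ≤ M)
    (hdisc : ¬ Continuous c) : ∃ x ∈ clusterAngles c, Real.cos x ≠ 1 := by
  by_contra! h
  refine hdisc (continuous_of_tendsto_nhdsGT hc0 hc hM ?_)
  refine isCompact_range_ofReal_cos.tendsto_nhds_of_unique_mapClusterPt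
    (.of_forall (mem_range_cos_of_bounded hc0 hc hM)) ?_
  rintro _ ⟨x, rfl⟩ hx
  simp [h x hx]

theorem clusterAngles_eq_univ {M : ℝ} (hM : ∀ t, ‖c t‖ ≤ M) (hdisc : ¬ Continuous c) :
    clusterAngles c = univ := by
  have hdense : Dense (clusterAngles c) := dense_of_exists_cos_nat_mul_eq
    (fun x hx y hy ↦ by rwa [clusterAngles, mem_ofPred_eq, hy])
    (fun x hx n hn ↦ nat_mul_mem_clusterAngles hc0 hc hx hn)
    (fun x hx q hq ↦ exists_mem_clusterAngles_cos_nat_mul_eq hc0 hc hM hx hq)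
    (exists_mem_clusterAngles_cos_ne_one hc0 hc hM hdisc)
  rw [← (isClosed_clusterAngles c).closure_eq, hdense.closure_eq]

end CosineFunction

theorem stmt_10 (c : ℝ → ℂ) (hc0 : c 0 = 1)
    (hc : ∀ s t : ℝ, c (s + t) + c (s - t) = 2 * c s * c t)
    (hb : ∃ M : ℝ, ∀ t : ℝ, ‖c t‖ ≤ M)
    (hdisc : ¬ Continuous c) :
    ∀ α ∈ Set.Icc (-1 : ℝ) 1, ∃ t : ℕ → ℝ,
      (∀ n, 0 < t n) ∧ Tendsto t atTop (nhds 0) ∧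
      Tendsto (fun n => c (t n)) atTop (nhds ((α : ℂ))) := by
  obtain ⟨M, hM⟩ := hb
  intro α hα
  have h : arccos α ∈ clusterAngles c := by
    rw [clusterAngles_eq_univ hc0 hc hM hdisc]; exact mem_univ _
  rw [clusterAngles, mem_ofPred_eq, cos_arccos hα.1 hα.2] at h
  exact h.exists_seq_pos
end

section
/- Let a, b be real numbers such that pa − qb ≠ 0 for every (p,q) ∈ ℤ² \ {(0,0)}. Then sup_{t∈ℝ} |cos(ta) − cos(tb)| = 2. -/
/-!
Since `b / a` is irrational, the multiples `m • 2π(b/a)` are dense in `ℝ/2πℤ`, so `cos (2π m b/a)`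
comes arbitrarily close to `-1`. At `t = 2π m / a` we have `cos (t a) = 1`, so
`|cos (t a) - cos (t b)|` comes arbitrarily close to its trivial upper bound `2`.
-/

open Real Set

lemma irrational_div_of_int_mul_sub_ne_zero {a b : ℝ}
    (h : ∀ p q : ℤ, (p, q) ≠ (0, 0) → (p : ℝ) * a - (q : ℝ) * b ≠ 0) : Irrational (b / a) := by
  rintro ⟨r, hr⟩
  have ha : a ≠ 0 := by simpa using h 1 0 (by simp)
  apply h r.num r.den (by simp [r.den_nz])
  rw [eq_div_iff ha] at hr
  rw [← hr, Rat.cast_def]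
  field_simp
  push_cast
  ring

lemma neg_one_mem_closure_range_cos_int_mul {x : ℝ} (hx : Irrational x) :
    (-1 : ℝ) ∈ closure (range fun m : ℤ => cos (m * (2 * π * x))) := by
  have hdense : DenseRange (· • ((2 * π * x : ℝ) : Angle) : ℤ → Angle) :=
    AddCircle.denseRange_zsmul_coe_iff.mpr (by rwa [mul_div_cancel_left₀ _ two_pi_pos.ne'])
  have := map_mem_closure Angle.continuous_cos (hdense.closure_range ▸ mem_univ (π : Angle))
    (mapsTo_image _ _)
  rw [Angle.cos_coe_pi, ← range_comp] at this
  simpa only [Function.comp_def, ← Angle.coe_zsmul, Angle.cos_coe, zsmul_eq_mul] using this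

lemma abs_cos_sub_cos_le_two (x y : ℝ) : |cos x - cos y| ≤ 2 := by
  rw [abs_le]
  constructor <;> linarith [neg_one_le_cos x, cos_le_one x, neg_one_le_cos y, cos_le_one y]

theorem stmt_12 (a b : ℝ)
    (h : ∀ p q : ℤ, (p, q) ≠ (0, 0) → (p : ℝ) * a - (q : ℝ) * b ≠ 0) :
    (⨆ t : ℝ, |Real.cos (t * a) - Real.cos (t * b)|) = 2 := by
  have ha : a ≠ 0 := by simpa using h 1 0 (by simp)
  have hclosure : (2 : ℝ) ∈ closure (range fun t : ℝ => |cos (t * a) - cos (t * b)|) := by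
    have := map_mem_closure (f := fun c : ℝ => |1 - c|) (by fun_prop)
      (neg_one_mem_closure_range_cos_int_mul (irrational_div_of_int_mul_sub_ne_zero h))
      (mapsTo_image _ _)
    norm_num at this
    refine closure_mono ?_ this
    rintro _ ⟨_, ⟨m, rfl⟩, rfl⟩
    refine ⟨2 * π * m / a, ?_⟩
    simp only [div_mul_cancel₀ _ ha]
    rw [show 2 * π * m = (m : ℤ) * (2 * π) by ring, cos_int_mul_two_pi]
    ring_nf
  exact (isLUB_of_mem_closure (by rintro _ ⟨t, rfl⟩; exact abs_cos_sub_cos_le_two _ _)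
    hclosure).ciSup_eq
end

section
/- Let a > 0 and 0 ≤ m < 2, and set Ω(a,m) = { b ≥ 0 : sup_{t∈ℝ} |cos(ta) − cos(tb)| ≤ m }. Then Ω(a,m) is finite, and every b ∈ Ω(a,m) has the form b = pa/q where p and q are odd positive integers, gcd(p,q) = 1, and p ≤ π/arccos(m−1), q ≤ π/arccos(m−1). -/
/-!
Testing at `t = π / a` rules out `b = 0`. If `b / a` were irrational, the multiples of `b / a`
would be dense modulo `1`, so some `t ∈ (2π / a) ℤ` would give `cos (t a) = 1` and `cos (t b)`
close to `-1`; hence `b = p a / q` in lowest terms. At `t = qπ / a` the difference is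
`(-1)^q - (-1)^p`, which forces `p` and `q` to be odd. Writing `q = 2l + 1` and choosing `k`
with `k p ≡ l (mod q)`, the time `t = 2πk / a` gives `1 + cos (π / q) ≤ m`, that is
`arccos (m - 1) ≤ π / q`; the bound on `p` follows by exchanging `a` and `b`.
-/

open Real

section

variable {a b m : ℝ} {p q : ℕ}

lemma ne_zero_of_forall_abs_cos_sub_le (ha : a ≠ 0) (hm : m < 2)
    (H : ∀ t : ℝ, |cos (t * a) - cos (t * b)| ≤ m) : b ≠ 0 := by
  rintro rfl
  have h := H (π / a)
  rw [div_mul_cancel₀ π ha, mul_zero, cos_pi, cos_zero] at h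
  norm_num at h
  linarith

lemma not_irrational_div_of_forall_abs_cos_sub_le (ha : a ≠ 0) (hm : m < 2)
    (H : ∀ t : ℝ, |cos (t * a) - cos (t * b)| ≤ m) : ¬Irrational (b / a) := by
  intro hirr
  have hdense := dense_addSubgroupClosure_pair_iff.2 (div_one (b / a) ▸ hirr)
  have hU : IsOpen {x : ℝ | cos (2 * π * x) < 1 - m} :=
    isOpen_lt (by fun_prop) continuous_const
  have hhalf : (1 / 2 : ℝ) ∈ {x : ℝ | cos (2 * π * x) < 1 - m} := by
    simp only [Set.mem_ofPred_eq, show 2 * π * (1 / 2) = π by ring, cos_pi]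
    linarith
  obtain ⟨x, hxU, hx⟩ := hdense.inter_open_nonempty _ hU ⟨_, hhalf⟩
  obtain ⟨n, j, rfl⟩ := AddSubgroup.mem_closure_pair.1 hx
  have h := H (n * (2 * π) / a)
  have htb : n * (2 * π) / a * b = 2 * π * (n • (b / a) + j • (1 : ℝ)) - j * (2 * π) := by
    simp only [zsmul_eq_mul]
    field_simp
    ring
  rw [div_mul_cancel₀ _ ha, htb, cos_int_mul_two_pi, cos_sub_int_mul_two_pi, abs_le] at h
  change cos _ < 1 - m at hxU
  linarith [h.2]

lemma odd_and_odd_of_forall_abs_cos_sub_le (ha : a ≠ 0) (hm : m < 2) (hpq : p.Coprime q)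
    (hab : q * b = p * a) (H : ∀ t : ℝ, |cos (t * a) - cos (t * b)| ≤ m) :
    Odd p ∧ Odd q := by
  have h := H (q * π / a)
  have htb : q * π / a * b = p * π := by
    rw [div_mul_eq_mul_div, mul_right_comm, hab]
    field_simp
  rw [div_mul_cancel₀ _ ha, htb, cos_nat_mul_pi, cos_nat_mul_pi, abs_le] at h
  rcases Nat.even_or_odd p with hp | hp <;> rcases Nat.even_or_odd q with hq | hq
  · have := Nat.Coprime.eq_one_of_dvd (Nat.Coprime.coprime_dvd_left hp.two_dvd hpq) hq.two_dvd
    omega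
  · rw [hp.neg_one_pow, hq.neg_one_pow] at h
    linarith [h.1]
  · rw [hp.neg_one_pow, hq.neg_one_pow] at h
    linarith [h.2]
  · exact ⟨hp, hq⟩

lemma cos_pi_div_le_of_forall_abs_cos_sub_le (ha : a ≠ 0) (hq : Odd q) (hpq : p.Coprime q)
    (hab : q * b = p * a) (H : ∀ t : ℝ, |cos (t * a) - cos (t * b)| ≤ m) :
    cos (π / q) ≤ m - 1 := by
  obtain ⟨A, B, hAB⟩ := Nat.isCoprime_iff_coprime.2 hpq
  have hbezout : (A * p + B * q : ℝ) = 1 := by exact_mod_cast hAB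
  have hb : b = p * a / q := by rw [← hab]; field_simp [hq.pos.ne']
  obtain ⟨l, rfl⟩ := hq
  have h := H ((l * A : ℤ) * (2 * π) / a)
  have htb : (l * A : ℤ) * (2 * π) / a * b =
      π - π / (2 * l + 1 : ℕ) + ((-l * B : ℤ) : ℝ) * (2 * π) := by
    rw [hb]
    push_cast at hbezout ⊢
    field_simp
    linear_combination (2 * l : ℝ) * hbezout
  rw [div_mul_cancel₀ _ ha, htb, cos_int_mul_two_pi, cos_add_int_mul_two_pi, cos_pi_sub,
    abs_le] at h
  linarith [h.2]

end

lemma le_pi_div_arccos_of_cos_pi_div_le {x y : ℝ} (hx : 1 ≤ x) (hy : y < 1)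
    (h : cos (π / x) ≤ y) : x ≤ π / arccos y := by
  have harccos : arccos y ≤ π / x := by
    calc arccos y ≤ arccos (cos (π / x)) := arccos_le_arccos h
      _ = π / x := arccos_cos (by positivity) (div_le_self pi_pos.le hx)
  rwa [le_div_iff₀ (arccos_pos.2 hy), ← le_div_iff₀' (by positivity)]

lemma exists_odd_coprime_of_forall_abs_cos_sub_le {a b m : ℝ} (ha : 0 < a) (hb : 0 ≤ b)
    (hm : m < 2) (H : ∀ t : ℝ, |cos (t * a) - cos (t * b)| ≤ m) :
    ∃ p q : ℕ, Odd p ∧ Odd q ∧ Nat.Coprime p q ∧ b = p * a / q ∧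
      1 ≤ p ∧ (p : ℝ) ≤ π / arccos (m - 1) ∧ 1 ≤ q ∧ (q : ℝ) ≤ π / arccos (m - 1) := by
  obtain ⟨r, hr⟩ := not_not.1 (not_irrational_div_of_forall_abs_cos_sub_le ha.ne' hm H)
  lift r to ℚ≥0 using Rat.cast_nonneg.1 (hr ▸ div_nonneg hb ha.le)
  rw [Rat.cast_nnratCast, NNRat.cast_def, div_eq_div_iff (by simp) ha.ne'] at hr
  set p := r.num
  set q := r.den
  have hpq : p.Coprime q := r.coprime_num_den
  have hab : q * b = p * a := by linarith
  have hb0 : b ≠ 0 := ne_zero_of_forall_abs_cos_sub_le ha.ne' hm H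
  obtain ⟨hp, hq⟩ := odd_and_odd_of_forall_abs_cos_sub_le ha.ne' hm hpq hab H
  have hq_bound := cos_pi_div_le_of_forall_abs_cos_sub_le ha.ne' hq hpq hab H
  have hp_bound := cos_pi_div_le_of_forall_abs_cos_sub_le hb0 hp hpq.symm hab.symm
    (fun t ↦ abs_sub_comm (cos (t * a)) _ ▸ H t)
  have hb_eq : b = p * a / q := by rw [eq_div_iff (by positivity), mul_comm, hab]
  refine ⟨p, q, hp, hq, hpq, hb_eq, hp.pos, ?_, hq.pos, ?_⟩
  · exact le_pi_div_arccos_of_cos_pi_div_le (by exact_mod_cast hp.pos) (by linarith) hp_bound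
  · exact le_pi_div_arccos_of_cos_pi_div_le (by exact_mod_cast hq.pos) (by linarith) hq_bound

theorem stmt_13_general (a m : ℝ) (ha : 0 < a) (hm2 : m < 2) :
    Set.Finite {b : ℝ | 0 ≤ b ∧ ∀ t : ℝ, |Real.cos (t * a) - Real.cos (t * b)| ≤ m} ∧
    ∀ b ∈ {b : ℝ | 0 ≤ b ∧ ∀ t : ℝ, |Real.cos (t * a) - Real.cos (t * b)| ≤ m},
      ∃ p q : ℕ, Odd p ∧ Odd q ∧ Nat.Coprime p q ∧
        b = (p : ℝ) * a / (q : ℝ) ∧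
        1 ≤ p ∧ (p : ℝ) ≤ Real.pi / Real.arccos (m - 1) ∧
        1 ≤ q ∧ (q : ℝ) ≤ Real.pi / Real.arccos (m - 1) := by
  have hform : ∀ b ∈ {b : ℝ | 0 ≤ b ∧ ∀ t : ℝ, |cos (t * a) - cos (t * b)| ≤ m}, _ :=
    fun b hb ↦ exists_odd_coprime_of_forall_abs_cos_sub_le ha hb.1 hm2 hb.2
  refine ⟨?_, hform⟩
  set N := ⌈π / arccos (m - 1)⌉₊
  refine (((Set.finite_Iic N).prod (Set.finite_Iic N)).image
    fun pq : ℕ × ℕ ↦ pq.1 * a / pq.2).subset fun b hb ↦ ?_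
  obtain ⟨p, q, -, -, -, rfl, -, hp, -, hq⟩ := hform b hb
  exact ⟨(p, q), ⟨Nat.cast_le.1 (hp.trans (Nat.le_ceil _)),
    Nat.cast_le.1 (hq.trans (Nat.le_ceil _))⟩, rfl⟩

theorem stmt_13 (a m : ℝ) (ha : 0 < a) (hm0 : 0 ≤ m) (hm2 : m < 2) :
    Set.Finite {b : ℝ | 0 ≤ b ∧ ∀ t : ℝ, |Real.cos (t * a) - Real.cos (t * b)| ≤ m} ∧
    ∀ b ∈ {b : ℝ | 0 ≤ b ∧ ∀ t : ℝ, |Real.cos (t * a) - Real.cos (t * b)| ≤ m},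
      ∃ p q : ℕ, Odd p ∧ Odd q ∧ Nat.Coprime p q ∧
        b = (p : ℝ) * a / (q : ℝ) ∧
        1 ≤ p ∧ (p : ℝ) ≤ Real.pi / Real.arccos (m - 1) ∧
        1 ≤ q ∧ (q : ℝ) ≤ Real.pi / Real.arccos (m - 1) :=
  stmt_13_general a m ha hm2
end

section
/- Let a ≥ 0 and 0 ≤ m < 8/(3√3). Then Ω(a,m) := { b ≥ 0 : sup_{t∈ℝ} |cos(ta) − cos(tb)| ≤ m } equals {a}. -/
/-!
Given `0 ≤ x < y` we find `t` with `|cos (t x) - cos (t y)| > m`. If `x / y` is irrational,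
`ℤx + ℤy` is dense, so `t x` can be made `≈ π` modulo `2π` while `t y ∈ 2πℤ`, and the difference
gets close to `2`. If `x / y = Q / P` in lowest terms, rescaling reduces to `cos (t Q) - cos (t P)`:
for `Q`, `P` of different parity `t = π` gives `2`; for both odd and `P ≥ 5`, a Bézout choice of `t`
gives `cos (t P) = -1` and `cos (t Q) = cos (π / P)`, hence at least `1 + cos (π / 5) > 8 / 5`.
The only remaining pair is `(Q, P) = (1, 3)`, where the supremum is exactly `8 / (3 √3)`.
-/

open Real

lemma eight_div_three_mul_sqrt_three_lt : 8 / (3 * √3) < 8 / 5 := by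
  have h3 : (5 : ℝ) < 3 * √3 := by
    nlinarith [Real.sq_sqrt (show (0 : ℝ) ≤ 3 by norm_num), Real.sqrt_nonneg 3]
  exact div_lt_div_of_pos_left (by norm_num) (by norm_num) h3

lemma seven_fourths_le_one_add_cos_pi_div {P : ℕ} (hP : 5 ≤ P) : 7 / 4 ≤ 1 + cos (π / P) := by
  have hP' : (5 : ℝ) ≤ P := by exact_mod_cast hP
  have hmono : cos (π / 5) ≤ cos (π / P) :=
    cos_le_cos_of_nonneg_of_le_pi (by positivity) (by linarith [pi_pos])
      (div_le_div_of_nonneg_left pi_pos.le (by norm_num) hP')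
  have h5 : (2 : ℝ) ≤ √5 := by
    rw [show (2 : ℝ) = √(2 ^ 2) by simp]; exact Real.sqrt_le_sqrt (by norm_num)
  rw [cos_pi_div_five] at hmono
  linarith

lemma exists_abs_cos_sub_cos_eq_two_of_even_of_odd {A B : ℕ} (hA : Even A) (hB : Odd B) :
    ∃ t : ℝ, |cos (t * A) - cos (t * B)| = 2 := by
  refine ⟨π, ?_⟩
  rw [mul_comm π, mul_comm π, cos_nat_mul_pi, cos_nat_mul_pi, hA.neg_one_pow, hB.neg_one_pow]
  norm_num

lemma exists_abs_cos_sub_cos_eq_one_add_cos_pi_div {Q P : ℕ} (hP : 0 < P)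
    (hcop : Nat.Coprime Q (2 * P)) :
    ∃ t : ℝ, |cos (t * Q) - cos (t * P)| = 1 + cos (π / P) := by
  obtain ⟨u, v, huv⟩ : IsCoprime (Q : ℤ) (2 * P) := by
    exact_mod_cast Nat.isCoprime_iff_coprime.mpr hcop
  have hu : Odd u := by
    refine (Int.odd_mul.mp (⟨-(P * v), ?_⟩ : Odd (u * Q))).1
    linear_combination huv
  have hP0 : (P : ℝ) ≠ 0 := by positivity
  refine ⟨π * u / P, ?_⟩
  have hQ : π * u / P * Q = π / P + ((-v : ℤ) : ℝ) * (2 * π) := by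
    have huvR : (u : ℝ) * Q + v * (2 * P) = 1 := by exact_mod_cast huv
    push_cast
    field_simp
    linear_combination huvR
  have hPt : π * u / P * P = u * π := by field_simp
  rw [hQ, hPt, cos_add_int_mul_two_pi, cos_int_mul_pi, hu.neg_one_zpow, sub_neg_eq_add,
    add_comm, abs_of_nonneg]
  linarith [neg_one_le_cos (π / P)]

lemma exists_abs_cos_sub_cos_three_mul_eq : ∃ t : ℝ, |cos t - cos (3 * t)| = 8 / (3 * √3) := by
  have h3 : √3 ^ 2 = 3 := Real.sq_sqrt (by norm_num)
  have hs3 : 1 < √3 := by nlinarith [Real.sqrt_nonneg 3]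
  -- `cos t - cos 3t = 4c - 4c³` with `c = cos t`, maximal at `c = 1 / √3`.
  refine ⟨arccos (√3)⁻¹, ?_⟩
  rw [cos_three_mul, cos_arccos (by linarith [inv_pos.mpr (by linarith : (0:ℝ) < √3)])
    (inv_le_one_of_one_le₀ hs3.le)]
  have hval : (√3)⁻¹ - (4 * (√3)⁻¹ ^ 3 - 3 * (√3)⁻¹) = 8 / (3 * √3) := by
    field_simp
    linear_combination 4 * h3
  rw [hval, abs_of_pos (by positivity)]

lemma exists_lt_abs_cos_sub_cos_of_irrational {m x y : ℝ} (hxy : Irrational (x / y)) (hm : m < 2) :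
    ∃ t : ℝ, m < |cos (t * x) - cos (t * y)| := by
  have hy : y ≠ 0 := by rintro rfl; simp at hxy
  -- `z = k x + n y` close to `y / 2` and `t = 2 π k / y` make `t y ∈ 2πℤ` and `t x ≈ π mod 2π`.
  let U : Set ℝ := {z | m < 1 - cos (2 * π * z / y)}
  have hU : IsOpen U := isOpen_lt continuous_const (by fun_prop)
  have hhalf : y / 2 ∈ U := by
    show m < 1 - cos (2 * π * (y / 2) / y)
    rw [show 2 * π * (y / 2) / y = π by field_simp, cos_pi]
    linarith
  obtain ⟨z, hz, hzU⟩ := (dense_addSubgroupClosure_pair_iff.mpr hxy).exists_mem_open hU ⟨_, hhalf⟩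
  obtain ⟨k, n, rfl⟩ := AddSubgroup.mem_closure_pair.mp hz
  refine ⟨2 * π * k / y, ?_⟩
  have hx : 2 * π * k / y * x = 2 * π * (k • x + n • y) / y + ((-n : ℤ) : ℝ) * (2 * π) := by
    simp only [zsmul_eq_mul]
    push_cast
    field_simp
    ring
  have hy' : 2 * π * k / y * y = (k : ℝ) * (2 * π) := by field_simp
  rw [hx, hy', cos_add_int_mul_two_pi, cos_int_mul_two_pi, abs_sub_comm,
    abs_of_nonneg (by linarith [cos_le_one (2 * π * (k • x + n • y) / y)])]
  exact hzU

lemma exists_lt_abs_cos_sub_cos_of_coprime {m : ℝ} {Q P : ℕ} (hQP : Q < P) (hcop : Nat.Coprime Q P)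
    (hm : m < 8 / (3 * √3)) : ∃ t : ℝ, m < |cos (t * Q) - cos (t * P)| := by
  have hm85 := hm.trans eight_div_three_mul_sqrt_three_lt
  rcases Nat.even_or_odd Q with hQ | hQ <;> rcases Nat.even_or_odd P with hP | hP
  · exact absurd hcop (Nat.not_coprime_of_dvd_of_dvd one_lt_two hQ.two_dvd hP.two_dvd)
  · obtain ⟨t, ht⟩ := exists_abs_cos_sub_cos_eq_two_of_even_of_odd hQ hP
    exact ⟨t, by linarith⟩
  · obtain ⟨t, ht⟩ := exists_abs_cos_sub_cos_eq_two_of_even_of_odd hP hQ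
    exact ⟨t, by rw [abs_sub_comm]; linarith⟩
  · obtain ⟨q, rfl⟩ := hQ
    obtain ⟨p, rfl⟩ := hP
    rcases Nat.lt_or_ge p 2 with hp | hp
    · obtain ⟨rfl, rfl⟩ : q = 0 ∧ p = 1 := by omega
      obtain ⟨t, ht⟩ := exists_abs_cos_sub_cos_three_mul_eq
      exact ⟨t, by norm_num [mul_comm t, ht, hm]⟩
    · obtain ⟨t, ht⟩ := exists_abs_cos_sub_cos_eq_one_add_cos_pi_div (Q := 2 * q + 1)
        (P := 2 * p + 1) (by omega) (Nat.Coprime.mul_right (by simp) hcop)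
      have := seven_fourths_le_one_add_cos_pi_div (P := 2 * p + 1) (by omega)
      exact ⟨t, by linarith⟩

lemma exists_lt_abs_cos_sub_cos_of_lt {m x y : ℝ} (hx : 0 ≤ x) (hxy : x < y)
    (hm : m < 8 / (3 * √3)) : ∃ t : ℝ, m < |cos (t * x) - cos (t * y)| := by
  have hy : 0 < y := hx.trans_lt hxy
  by_cases hirr : Irrational (x / y)
  · exact exists_lt_abs_cos_sub_cos_of_irrational hirr
      (hm.trans (eight_div_three_mul_sqrt_three_lt.trans (by norm_num)))
  obtain ⟨q, hq⟩ := not_not.mp hirr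
  have hq0 : 0 ≤ q := by exact_mod_cast hq ▸ div_nonneg hx hy.le
  obtain ⟨Q, hQ⟩ := Int.eq_ofNat_of_zero_le (Rat.num_nonneg.mpr hq0)
  have hP : (0 : ℝ) < q.den := by exact_mod_cast q.pos
  have hxy' : x / y = Q / q.den := by rw [← hq, Rat.cast_def, hQ, Int.cast_natCast]
  have hQP : Q < q.den := by
    have : (Q : ℝ) / q.den < 1 := by rw [← hxy', div_lt_one hy]; exact hxy
    exact_mod_cast (div_lt_one hP).mp this
  have hcop : Nat.Coprime Q q.den := by simpa [hQ] using q.reduced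
  obtain ⟨t, ht⟩ := exists_lt_abs_cos_sub_cos_of_coprime hQP hcop hm
  refine ⟨t * q.den / y, ?_⟩
  have hx' : t * q.den / y * x = t * Q := by
    rw [div_eq_div_iff hy.ne' hP.ne'] at hxy'
    rw [div_mul_eq_mul_div, mul_assoc, mul_comm (q.den : ℝ), hxy']
    field_simp
  rwa [hx', div_mul_cancel₀ _ hy.ne']

theorem stmt_16 (a m : ℝ) (ha : 0 ≤ a) (hm0 : 0 ≤ m) (hm : m < 8 / (3 * Real.sqrt 3)) :
    {b : ℝ | 0 ≤ b ∧ ∀ t : ℝ, |Real.cos (t * a) - Real.cos (t * b)| ≤ m} = {a} := by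
  ext b
  simp only [Set.mem_ofPred_eq, Set.mem_singleton_iff]
  refine ⟨fun ⟨hb, hbound⟩ => ?_, ?_⟩
  · by_contra hne
    obtain ⟨t, ht⟩ : ∃ t : ℝ, m < |cos (t * a) - cos (t * b)| := by
      rcases lt_or_gt_of_ne hne with h | h
      · obtain ⟨t, ht⟩ := exists_lt_abs_cos_sub_cos_of_lt hb h hm
        exact ⟨t, by rwa [abs_sub_comm]⟩
      · exact exists_lt_abs_cos_sub_cos_of_lt ha h hm
    exact (hbound t).not_gt ht
  · rintro rfl
    exact ⟨ha, fun t => by simpa using hm0⟩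
end
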